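/- arXiv:2302.00352 — 13 statements merged into one kernel-verified Lean document; each statement's English description precedes it below -/
import Mathlib

section
/- Let b, k ≥ 1 and let G be a finite simple graph that contains no set of b+1 vertices which are pairwise (2bk+2)-near-twins. Then for every k-flip G′ of G, the set of vertices whose degree in G′ is at most bk has at most bk elements. -/
open scoped symmDiff

/-- A `k`-flip of a graph `G`: there exist a coloring `c : V → Fin k` and a symmetric
relation `F` on `Fin k` such that distinct vertices `u, v` are adjacent in `G'` iff
exactly one of `G.Adj u v` and `F (c u) (c v)` holds. -/
def IsKFlip {V : Type*} (k : ℕ) (G G' : SimpleGraph V) : Prop :=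
  ∃ (c : V → Fin k) (F : Fin k → Fin k → Prop), Symmetric F ∧
    ∀ u v : V, u ≠ v → (G'.Adj u v ↔ Xor' (G.Adj u v) (F (c u) (c v)))

/-!
Two vertices of the same colour see every third vertex `w` flipped in the same way, so
outside `{u, v}` their neighbourhoods differ in `G` exactly where they differ in `G'`.
Hence two same-coloured vertices of `G'`-degree at most `bk` are `(2bk + 2)`-near-twins in `G`.
If more than `bk` vertices had degree at most `bk`, pigeonhole over the `k` colours would
give `b + 1` of them of the same colour, i.e. `b + 1` pairwise near-twins.
-/

theorem Set.ncard_symmDiff_le {α : Type*} {s t : Set α} (hs : s.Finite) (ht : t.Finite) :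
    (s ∆ t).ncard ≤ s.ncard + t.ncard :=
  (Set.ncard_le_ncard symmDiff_le_sup (hs.union ht)).trans (Set.ncard_union_le s t)

theorem Set.exists_subset_ncard_eq_pairwise_eq_of_mul_lt_ncard {V α : Type*} [Fintype α]
    {s : Set V} (f : V → α) {b : ℕ} (h : Fintype.card α * b < s.ncard) :
    ∃ t ⊆ s, t.ncard = b + 1 ∧ t.Pairwise fun x y => f x = f y := by
  classical
  have hs : s.Finite := Set.finite_of_ncard_pos (by omega)
  rw [Set.ncard_eq_toFinset_card s hs, ← Finset.card_univ] at h
  obtain ⟨a, -, ha⟩ := Finset.exists_lt_card_fiber_of_mul_lt_card_of_maps_to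
    (fun x _ => Finset.mem_univ (f x)) h
  obtain ⟨t, hts, ht⟩ := Finset.exists_subset_card_eq (Nat.succ_le_of_lt ha)
  refine ⟨t, fun x hx => ?_, by rw [Set.ncard_coe_finset, ht], fun x hx y hy _ => ?_⟩
  · simpa using (Finset.mem_filter.mp (hts hx)).1
  · exact (Finset.mem_filter.mp (hts hx)).2.trans (Finset.mem_filter.mp (hts hy)).2.symm

namespace SimpleGraph

variable {V α : Type*} {G G' : SimpleGraph V} {c : V → α} {F : α → α → Prop}

theorem symmDiff_neighborSet_subset_of_flip
    (hF : ∀ u v : V, u ≠ v → (G'.Adj u v ↔ Xor (G.Adj u v) (F (c u) (c v))))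
    {u v : V} (huv : c u = c v) :
    G.neighborSet u ∆ G.neighborSet v ⊆ G'.neighborSet u ∆ G'.neighborSet v ∪ {u, v} := by
  intro w hw
  by_cases hw' : w = u ∨ w = v
  · exact Or.inr hw'
  obtain ⟨hwu, hwv⟩ := not_or.mp hw'
  have hu := hF u w (Ne.symm hwu)
  have hv := hF v w (Ne.symm hwv)
  rw [huv] at hu
  simp only [Set.mem_union, Set.mem_symmDiff, mem_neighborSet, Xor] at hw hu hv ⊢
  tauto

theorem ncard_symmDiff_neighborSet_le_of_flip [Finite V]
    (hF : ∀ u v : V, u ≠ v → (G'.Adj u v ↔ Xor (G.Adj u v) (F (c u) (c v))))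
    {u v : V} (huv : c u = c v) :
    (G.neighborSet u ∆ G.neighborSet v).ncard ≤
      (G'.neighborSet u).ncard + (G'.neighborSet v).ncard + 2 :=
  calc (G.neighborSet u ∆ G.neighborSet v).ncard
      ≤ (G'.neighborSet u ∆ G'.neighborSet v ∪ {u, v}).ncard :=
        Set.ncard_le_ncard (symmDiff_neighborSet_subset_of_flip hF huv) (Set.toFinite _)
    _ ≤ (G'.neighborSet u ∆ G'.neighborSet v).ncard + ({u, v} : Set V).ncard :=
        Set.ncard_union_le _ _
    _ ≤ (G'.neighborSet u).ncard + (G'.neighborSet v).ncard + 2 :=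
        Nat.add_le_add (Set.ncard_symmDiff_le (Set.toFinite _) (Set.toFinite _))
          ((Set.ncard_insert_le u {v}).trans (by simp))

end SimpleGraph

theorem stmt0_general {V : Type*} [Fintype V] (b k : ℕ)
    (G : SimpleGraph V)
    (hG : ¬ ∃ S : Set V, S.ncard = b + 1 ∧
      S.Pairwise fun u v => ((G.neighborSet u) ∆ (G.neighborSet v)).ncard ≤ 2 * b * k + 2)
    (G' : SimpleGraph V) (hflip : IsKFlip k G G') :
    {v : V | (G'.neighborSet v).ncard ≤ b * k}.ncard ≤ b * k := by
  obtain ⟨c, F, -, hF⟩ := hflip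
  by_contra! hlarge
  have hlarge' : Fintype.card (Fin k) * b < {v | (G'.neighborSet v).ncard ≤ b * k}.ncard := by
    simpa [mul_comm] using hlarge
  obtain ⟨S, hS, hScard, hSc⟩ := Set.exists_subset_ncard_eq_pairwise_eq_of_mul_lt_ncard c hlarge'
  refine hG ⟨S, hScard, fun u hu v hv huv => ?_⟩
  have hdu : (G'.neighborSet u).ncard ≤ b * k := hS hu
  have hdv : (G'.neighborSet v).ncard ≤ b * k := hS hv
  have := G.ncard_symmDiff_neighborSet_le_of_flip hF (hSc hu hv huv)
  linarith

/-- If a finite graph `G` contains no set of `b + 1` vertices that are pairwise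
`(2bk + 2)`-near-twins, then for every `k`-flip `G'` of `G` the set of vertices of
degree at most `bk` in `G'` has at most `bk` elements. -/
theorem stmt0 {V : Type*} [Fintype V] (b k : ℕ) (hb : 1 ≤ b) (hk : 1 ≤ k)
    (G : SimpleGraph V)
    (hG : ¬ ∃ S : Set V, S.ncard = b + 1 ∧
      S.Pairwise fun u v => ((G.neighborSet u) ∆ (G.neighborSet v)).ncard ≤ 2 * b * k + 2)
    (G' : SimpleGraph V) (hflip : IsKFlip k G G') :
    {v : V | (G'.neighborSet v).ncard ≤ b * k}.ncard ≤ b * k :=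
  stmt0_general b k G hG G' hflip
end

section
/- Let G be a finite simple graph on vertex set V and let m ≥ 1. Suppose there is a set X₀ ⊆ V with |X₀| = 2^m that is shattered by the neighborhoods of G, i.e., for every subset A ⊆ X₀ there exists v ∈ V with N_G(v) ∩ X₀ = A. Then there exist sets X, Y ⊆ V with |X| = |Y| = 2^m such that: for all distinct u, u′ ∈ X, |(N_G(u) △ N_G(u′)) ∩ Y| ≥ 2^{m−1}, and for all distinct w, w′ ∈ Y, |(N_G(w) △ N_G(w′)) ∩ X| ≥ 2^{m−1}. (In other words, the bipartite graph semi-induced by X and Y has no pair of (2^{m−1}−1)-near-twins in either part.) -/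
open scoped symmDiff

private def Bform (m : ℕ) (f z : Fin m → ZMod 2) : ZMod 2 := ∑ i, f i * z i

private lemma Bform_comm (m : ℕ) (f z : Fin m → ZMod 2) : Bform m f z = Bform m z f :=
  Finset.sum_congr rfl fun i _ => mul_comm _ _

private lemma Bform_add_left (m : ℕ) (f g z : Fin m → ZMod 2) :
    Bform m (f + g) z = Bform m f z + Bform m g z := by
  unfold Bform
  rw [← Finset.sum_add_distrib]
  exact Finset.sum_congr rfl fun i _ => by simp [add_mul]

private lemma Bform_add_right (m : ℕ) (f z w : Fin m → ZMod 2) :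
    Bform m f (z + w) = Bform m f z + Bform m f w := by
  rw [Bform_comm, Bform_add_left, Bform_comm m z f, Bform_comm m w f]

private lemma zmod2_ne_zero (a : ZMod 2) (h : a ≠ 0) : a = 1 := by revert h; revert a; decide

private lemma zmod2_xor (a b : ZMod 2) : a + b = 1 ↔ ((a = 1 ∧ ¬ b = 1) ∨ (b = 1 ∧ ¬ a = 1)) := by
  revert a b; decide

private lemma zmod2_add_eq_zero (a b : ZMod 2) : a + b = 0 ↔ a = b := by revert a b; decide

private lemma Bform_single (m : ℕ) (i : Fin m) (z : Fin m → ZMod 2) :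
    Bform m (Pi.single i 1) z = z i := by
  unfold Bform
  rw [Finset.sum_eq_single i]
  · simp
  · intro j _ hj; simp [Pi.single_apply, hj]
  · simp

private lemma key_count (m : ℕ) (hm : 1 ≤ m) (z : Fin m → ZMod 2) (hz : z ≠ 0) :
    (Finset.univ.filter (fun f : Fin m → ZMod 2 => Bform m f z = 1)).card = 2 ^ (m - 1) := by
  obtain ⟨i, hi⟩ : ∃ i, z i ≠ 0 := by
    by_contra h
    push_neg at h
    exact hz (funext h)
  set f₀ : Fin m → ZMod 2 := Pi.single i 1 with hf₀
  have hBf₀ : Bform m f₀ z = 1 := by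
    rw [hf₀, Bform_single]; exact zmod2_ne_zero _ hi
  have hadd : ∀ f : Fin m → ZMod 2, Bform m (f + f₀) z = Bform m f z + 1 := by
    intro f; rw [Bform_add_left, hBf₀]
  have hinv : ∀ f : Fin m → ZMod 2, f + f₀ + f₀ = f := by
    intro f; funext j
    simp [add_assoc, CharTwo.add_self_eq_zero]
  have hbij : (Finset.univ.filter (fun f : Fin m → ZMod 2 => Bform m f z = 0)).card =
      (Finset.univ.filter (fun f : Fin m → ZMod 2 => Bform m f z = 1)).card := by
    apply Finset.card_bij' (fun f _ => f + f₀) (fun f _ => f + f₀)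
    · intro f hf
      simp only [Finset.mem_filter, Finset.mem_univ, true_and] at hf ⊢
      rw [hadd, hf]; decide
    · intro f hf
      simp only [Finset.mem_filter, Finset.mem_univ, true_and] at hf ⊢
      rw [hadd, hf]; decide
    · intro f _; exact hinv f
    · intro f _; exact hinv f
  have hsplit : (Finset.univ.filter (fun f : Fin m → ZMod 2 => Bform m f z = 1)).card +
      (Finset.univ.filter (fun f : Fin m → ZMod 2 => ¬ Bform m f z = 1)).card = 2 ^ m := by
    rw [Finset.card_filter_add_card_filter_not]
    simp [Finset.card_univ, Fintype.card_fun]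
  have hneg : (Finset.univ.filter (fun f : Fin m → ZMod 2 => ¬ Bform m f z = 1)) =
      (Finset.univ.filter (fun f : Fin m → ZMod 2 => Bform m f z = 0)) := by
    apply Finset.filter_congr
    intro f _
    generalize Bform m f z = a
    revert a; decide
  rw [hneg, hbij] at hsplit
  have h2 : 2 ^ m = 2 * 2 ^ (m - 1) := by
    conv_lhs => rw [show m = (m - 1) + 1 by omega]
    ring
  omega

/-- If the neighborhoods of a finite graph `G` shatter a set `X₀` of size `2 ^ m` (with
`m ≥ 1`), then there are sets `X, Y` of size `2 ^ m` such that the bipartite graph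
semi-induced by `X` and `Y` has no pair of `(2 ^ (m - 1) - 1)`-near-twins in either
part: any two distinct vertices of `X` have neighborhood symmetric difference of size
at least `2 ^ (m - 1)` inside `Y`, and symmetrically. -/
theorem stmt3 {V : Type*} [Fintype V] (G : SimpleGraph V) (m : ℕ) (hm : 1 ≤ m)
    (X₀ : Set V) (hcard : X₀.ncard = 2 ^ m)
    (hshatter : ∀ A : Set V, A ⊆ X₀ → ∃ v : V, G.neighborSet v ∩ X₀ = A) :
    ∃ X Y : Set V, X.ncard = 2 ^ m ∧ Y.ncard = 2 ^ m ∧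
      (∀ u ∈ X, ∀ u' ∈ X, u ≠ u' →
        2 ^ (m - 1) ≤ (((G.neighborSet u) ∆ (G.neighborSet u')) ∩ Y).ncard) ∧
      (∀ w ∈ Y, ∀ w' ∈ Y, w ≠ w' →
        2 ^ (m - 1) ≤ (((G.neighborSet w) ∆ (G.neighborSet w')) ∩ X).ncard) := by
  classical
  have hcardX : Fintype.card X₀ = 2 ^ m := by
    rw [← Nat.card_eq_fintype_card, Nat.card_coe_set_eq, hcard]
  have e : X₀ ≃ (Fin m → ZMod 2) :=
    Fintype.equivOfCardEq (by rw [hcardX, Fintype.card_fun]; simp)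
  set A : (Fin m → ZMod 2) → Set V :=
    fun k => Subtype.val '' (e.symm '' {z | Bform m k z = 1}) with hA
  have memA : ∀ (k : Fin m → ZMod 2) (v : V),
      v ∈ A k ↔ ∃ h : v ∈ X₀, Bform m k (e ⟨v, h⟩) = 1 := by
    intro k v
    constructor
    · rintro ⟨x, ⟨zz, hzz, hez⟩, rfl⟩
      refine ⟨x.2, ?_⟩
      have hx : e x = zz := by rw [← hez, Equiv.apply_symm_apply]
      rw [Subtype.coe_eta, hx]; exact hzz
    · rintro ⟨h, hB⟩
      exact ⟨⟨v, h⟩, ⟨e ⟨v, h⟩, hB, Equiv.symm_apply_apply _ _⟩, rfl⟩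
  have hAsub : ∀ k, A k ⊆ X₀ := by
    rintro k v ⟨x, _, rfl⟩; exact x.2
  have ncardA : ∀ k : Fin m → ZMod 2, k ≠ 0 → (A k).ncard = 2 ^ (m - 1) := by
    intro k hk
    rw [hA]
    rw [Set.ncard_image_of_injective _ Subtype.val_injective,
      Set.ncard_image_of_injective _ e.symm.injective,
      Set.ncard_eq_toFinset_card', Set.toFinset_setOf]
    have hfil : (Finset.univ.filter (fun z : Fin m → ZMod 2 => Bform m k z = 1))
        = (Finset.univ.filter (fun z : Fin m → ZMod 2 => Bform m z k = 1)) := by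
      apply Finset.filter_congr
      intro zz _
      rw [Bform_comm]
    rw [hfil]
    exact key_count m hm k hk
  have hch : ∀ k, ∃ v, G.neighborSet v ∩ X₀ = A k := fun k => hshatter (A k) (hAsub k)
  set vv : (Fin m → ZMod 2) → V := fun k => (hch k).choose with hvv
  have hN : ∀ k, G.neighborSet (vv k) ∩ X₀ = A k := fun k => (hch k).choose_spec
  have hmemN : ∀ (k : Fin m → ZMod 2) (x : X₀), (x : V) ∈ G.neighborSet (vv k) ↔
      Bform m k (e x) = 1 := by
    intro k x
    constructor
    · intro h
      have hx : (x : V) ∈ A k := (hN k) ▸ (Set.mem_inter h x.2)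
      obtain ⟨h', hB⟩ := (memA k x).mp hx
      rwa [Subtype.coe_eta] at hB
    · intro hB
      have hx : (x : V) ∈ A k := (memA k x).mpr ⟨x.2, by rwa [Subtype.coe_eta]⟩
      exact ((hN k) ▸ hx : (x : V) ∈ G.neighborSet (vv k) ∩ X₀).1
  have hadd_ne : ∀ f g : Fin m → ZMod 2, f ≠ g → f + g ≠ 0 := by
    intro f g hne h
    exact hne (funext fun i => (zmod2_add_eq_zero (f i) (g i)).mp (congrFun h i))
  have hinj : Function.Injective vv := by
    intro f g hfg
    by_contra hne
    have hk : f + g ≠ 0 := hadd_ne f g hne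
    obtain ⟨i, hi⟩ : ∃ i, (f + g) i ≠ 0 := by
      by_contra h; push_neg at h; exact hk (funext h)
    set z : Fin m → ZMod 2 := Pi.single i 1 with hz
    have hBz : Bform m (f + g) z = 1 := by
      rw [Bform_comm, hz, Bform_single]; exact zmod2_ne_zero _ hi
    rw [Bform_add_left, zmod2_xor] at hBz
    set x : X₀ := e.symm z with hx
    have hez : e x = z := Equiv.apply_symm_apply _ _
    have h1 : (x : V) ∈ G.neighborSet (vv f) ↔ Bform m f z = 1 := by
      rw [hmemN f x, hez]
    have h2 : (x : V) ∈ G.neighborSet (vv g) ↔ Bform m g z = 1 := by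
      rw [hmemN g x, hez]
    rw [hfg] at h1
    rcases hBz with ⟨ha, hb⟩ | ⟨ha, hb⟩
    · exact hb (h2.mp (h1.mpr ha))
    · exact hb (h1.mp (h2.mpr ha))
  have hmemN' : ∀ (k : Fin m → ZMod 2) (x : V) (hx : x ∈ X₀),
      vv k ∈ G.neighborSet x ↔ Bform m k (e ⟨x, hx⟩) = 1 := by
    intro k x hx
    rw [SimpleGraph.mem_neighborSet, G.adj_comm, ← SimpleGraph.mem_neighborSet]
    exact hmemN k ⟨x, hx⟩
  have hXcard : (Set.range vv).ncard = 2 ^ m := by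
    rw [← Set.image_univ, Set.ncard_image_of_injective _ hinj, Set.ncard_univ,
      Nat.card_eq_fintype_card, Fintype.card_fun]
    simp
  refine ⟨Set.range vv, X₀, hXcard, hcard, ?_, ?_⟩
  · -- pairs in X
    rintro u ⟨f, rfl⟩ u' ⟨g, rfl⟩ hne
    have hfg : f ≠ g := fun h => hne (by rw [h])
    have hDiff : ((G.neighborSet (vv f)) ∆ (G.neighborSet (vv g))) ∩ X₀ = A (f + g) := by
      ext v
      rw [Set.mem_inter_iff, Set.mem_symmDiff, memA]
      constructor
      · rintro ⟨hsym, hv⟩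
        refine ⟨hv, ?_⟩
        rw [Bform_add_left, zmod2_xor]
        rcases hsym with ⟨h1, h2⟩ | ⟨h1, h2⟩
        · exact Or.inl ⟨(hmemN f ⟨v, hv⟩).mp h1, fun hB => h2 ((hmemN g ⟨v, hv⟩).mpr hB)⟩
        · exact Or.inr ⟨(hmemN g ⟨v, hv⟩).mp h1, fun hB => h2 ((hmemN f ⟨v, hv⟩).mpr hB)⟩
      · rintro ⟨hv, hB⟩
        rw [Bform_add_left, zmod2_xor] at hB
        refine ⟨?_, hv⟩
        rcases hB with ⟨h1, h2⟩ | ⟨h1, h2⟩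
        · exact Or.inl ⟨(hmemN f ⟨v, hv⟩).mpr h1, fun hN' => h2 ((hmemN g ⟨v, hv⟩).mp hN')⟩
        · exact Or.inr ⟨(hmemN g ⟨v, hv⟩).mpr h1, fun hN' => h2 ((hmemN f ⟨v, hv⟩).mp hN')⟩
    rw [hDiff, ncardA _ (hadd_ne f g hfg)]
  · -- pairs in Y = X₀
    intro w hw w' hw' hne
    set z : Fin m → ZMod 2 := e ⟨w, hw⟩ + e ⟨w', hw'⟩ with hzdef
    have hz : z ≠ 0 := by
      apply hadd_ne
      intro h
      exact hne (congrArg Subtype.val (e.injective h))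
    have hset : ((G.neighborSet w) ∆ (G.neighborSet w')) ∩ Set.range vv
        = vv '' {f | Bform m f z = 1} := by
      ext v
      constructor
      · rintro ⟨hsym, f, rfl⟩
        refine ⟨f, ?_, rfl⟩
        show Bform m f z = 1
        rw [hzdef, Bform_add_right, zmod2_xor]
        rw [Set.mem_symmDiff] at hsym
        rcases hsym with ⟨h1, h2⟩ | ⟨h1, h2⟩
        · exact Or.inl ⟨(hmemN' f w hw).mp h1, fun hB => h2 ((hmemN' f w' hw').mpr hB)⟩
        · exact Or.inr ⟨(hmemN' f w' hw').mp h1, fun hB => h2 ((hmemN' f w hw).mpr hB)⟩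
      · rintro ⟨f, hB, rfl⟩
        refine ⟨?_, ⟨f, rfl⟩⟩
        rw [Set.mem_symmDiff]
        rw [Set.mem_setOf_eq, hzdef, Bform_add_right, zmod2_xor] at hB
        rcases hB with ⟨h1, h2⟩ | ⟨h1, h2⟩
        · exact Or.inl ⟨(hmemN' f w hw).mpr h1, fun hN' => h2 ((hmemN' f w' hw').mp hN')⟩
        · exact Or.inr ⟨(hmemN' f w' hw').mpr h1, fun hN' => h2 ((hmemN' f w hw).mp hN')⟩
    rw [hset, Set.ncard_image_of_injective _ hinj,
      Set.ncard_eq_toFinset_card', Set.toFinset_setOf, key_count m hm z hz]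
end

section
/- Let G be a finite simple graph, let k ∈ ℕ, and let V(G) = A ⊎ B be a bipartition of its vertex set with cut-rank rk_G(A,B) > k. Then for every k-flip G′ of G there exist a ∈ A and b ∈ B that are adjacent in G′. -/
/-- The cut-rank of a pair of vertex sets `A, B` in a graph `G`: the rank over `GF(2)`
of the `A × B` matrix whose `(a, b)` entry is `1` iff `ab` is an edge of `G`. -/
noncomputable def cutRank {V : Type*} (G : SimpleGraph V) [DecidableRel G.Adj]
    (A B : Finset V) : ℕ :=
  (Matrix.of fun (a : A) (b : B) => if G.Adj a.1 b.1 then (1 : ZMod 2) else 0).rank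

/-!
If a `k`-flip `G'` has no edge between `A` and `B`, then on `A × B` the flip undoes `G`
exactly: `a, b` are adjacent in `G` iff `F (c a) (c b)`. So the row of `a` in the
`A × B` adjacency matrix depends only on the colour `c a`, the matrix has at most `k`
distinct rows, and its rank is at most `k`.
-/

theorem Matrix.rank_le_card_of_eq_submatrix {m n ι R : Type*} [Fintype n] [Fintype ι]
    [CommSemiring R] [StrongRankCondition R] {M : Matrix m n R} (N : Matrix ι n R) (r : m → ι)
    (h : M = N.submatrix r id) : M.rank ≤ Fintype.card ι :=
  h ▸ (N.rank_submatrix_le r id).trans N.rank_le_card_height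

theorem IsKFlip.cutRank_le_of_forall_not_adj {V : Type*} {k : ℕ} {G G' : SimpleGraph V}
    [DecidableRel G.Adj] (hflip : IsKFlip k G G') {A B : Finset V} (hdisj : Disjoint A B)
    (hcut : ∀ a ∈ A, ∀ b ∈ B, ¬ G'.Adj a b) : cutRank G A B ≤ k := by
  classical
  obtain ⟨c, F, -, hiff⟩ := hflip
  have hG : ∀ (a : A) (b : B), G.Adj a b ↔ F (c a) (c b) := fun a b => by
    have hne : (a : V) ≠ b := fun h => Finset.disjoint_left.mp hdisj a.2 (h ▸ b.2)
    exact (not_xor _ _).mp ((hiff a b hne).not.mp (hcut a a.2 b b.2))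
  calc cutRank G A B ≤ Fintype.card (Fin k) :=
        Matrix.rank_le_card_of_eq_submatrix
          (Matrix.of fun i (b : B) => if F i (c b) then (1 : ZMod 2) else 0) (fun a => c a)
          (by ext a b; simp [hG a b])
    _ = k := Fintype.card_fin k

theorem stmt7_general {V : Type*}
    (G : SimpleGraph V) [DecidableRel G.Adj] (k : ℕ)
    (A B : Finset V) (hdisj : Disjoint A B)
    (hrank : k < cutRank G A B)
    (G' : SimpleGraph V) (hflip : IsKFlip k G G') :
    ∃ a ∈ A, ∃ b ∈ B, G'.Adj a b := by
  by_contra! hcut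
  exact (hflip.cutRank_le_of_forall_not_adj hdisj hcut).not_gt hrank

/-- If `V(G) = A ⊎ B` is a bipartition with cut-rank greater than `k`, then every
`k`-flip of `G` has an edge between `A` and `B`. -/
theorem stmt7 {V : Type*} [Fintype V] [DecidableEq V]
    (G : SimpleGraph V) [DecidableRel G.Adj] (k : ℕ)
    (A B : Finset V) (hdisj : Disjoint A B) (hcover : A ∪ B = Finset.univ)
    (hrank : k < cutRank G A B)
    (G' : SimpleGraph V) (hflip : IsKFlip k G G') :
    ∃ a ∈ A, ∃ b ∈ B, G'.Adj a b :=
  stmt7_general G k A B hdisj hrank G' hflip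
end

section
/- Let G be a finite simple graph, let k ∈ ℕ, and let U ⊆ V(G) be a well-linked set with |U| > 3k. Then for every k-flip G′ of G, there are at most k vertices v ∈ U with the property that at most k vertices u ∈ U are reachable from v in G′ (reachability includes v itself). In other words, every well-linked set of size greater than 3k is an (∞,k,k)-hideout. -/
/-!
The components of `G'` that contain a vertex of `U` reaching at most `k` vertices of `U` each
meet `U` in at most `k` vertices. If there were more than `k` such vertices, adding their
components one at a time would produce a union `A` of components with `k < |A ∩ U| ≤ 2k`, hence
also `|U \ A| > k`. No edge of `G'` leaves `A`, so on `A × Aᶜ` the adjacency matrix of `G`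
coincides with the flip relation `F (c a) (c b)`, which factors through `k` colours and has rank
at most `k`, contradicting well-linkedness.
-/

open Finset

theorem Finset.exists_subset_card_biUnion_mem_Ioc {ι α : Type*} [DecidableEq α] {k : ℕ}
    (f : ι → Finset α) (s : Finset ι) (hf : ∀ i ∈ s, #(f i) ≤ k) (hs : k < #(s.biUnion f)) :
    ∃ t ⊆ s, k < #(t.biUnion f) ∧ #(t.biUnion f) ≤ 2 * k := by
  classical
  induction s using Finset.induction_on with
  | empty => simp at hs
  | insert i s _ ih =>
    by_cases hsk : k < #(s.biUnion f)
    · obtain ⟨t, hts, ht⟩ := ih (fun j hj => hf j (mem_insert_of_mem hj)) hsk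
      exact ⟨t, hts.trans (subset_insert i s), ht⟩
    · refine ⟨insert i s, Subset.rfl, hs, ?_⟩
      calc #((insert i s).biUnion f) ≤ #(f i) + #(s.biUnion f) := by
            rw [biUnion_insert]; exact card_union_le _ _
        _ ≤ 2 * k := by linarith [hf i (mem_insert_self i s)]

theorem IsKFlip.cutRank_le {V : Type*} {k : ℕ} {G G' : SimpleGraph V} [DecidableRel G.Adj]
    (hflip : IsKFlip k G G') {A B : Finset V} (hAB : Disjoint A B)
    (hsep : ∀ a ∈ A, ∀ b ∈ B, ¬ G'.Adj a b) : cutRank G A B ≤ k := by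
  classical
  obtain ⟨c, F, -, hadj⟩ := hflip
  let P : Matrix A (Fin k) (ZMod 2) := Matrix.of fun a i => if c a = i then 1 else 0
  let Q : Matrix (Fin k) B (ZMod 2) := Matrix.of fun i b => if F i (c b) then 1 else 0
  have hPQ : (Matrix.of fun (a : A) (b : B) => if G.Adj a b then (1 : ZMod 2) else 0)
      = P * Q := by
    ext a b
    have hGF : G.Adj a b ↔ F (c a) (c b) := by
      by_contra hne
      exact hsep a a.2 b b.2 ((hadj a b fun h => disjoint_left.mp hAB a.2 (h ▸ b.2)).mpr
        ((xor_iff_not_iff _ _).mpr hne))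
    simp only [Matrix.of_apply, Matrix.mul_apply, P, Q, ite_mul, one_mul, zero_mul,
      sum_ite_eq, mem_univ, if_true, hGF]
  calc cutRank G A B = (P * Q).rank := by rw [cutRank, hPQ]
    _ ≤ Q.rank := Matrix.rank_mul_le_right P Q
    _ ≤ k := (Matrix.rank_le_card_height Q).trans_eq (Fintype.card_fin k)

/-- Every well-linked set `U` with `|U| > 3k` is an `(∞, k, k)`-hideout: for every
`k`-flip `G'` of `G`, at most `k` vertices `v ∈ U` can reach at most `k` vertices of
`U` in `G'` (reachability includes `v` itself). -/
theorem stmt8 {V : Type*} [Fintype V] [DecidableEq V]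
    (G : SimpleGraph V) [DecidableRel G.Adj] (k : ℕ)
    (U : Finset V) (hU : 3 * k < U.card)
    (hwl : ∀ A B : Finset V, Disjoint A B → A ∪ B = Finset.univ →
      min (A ∩ U).card (B ∩ U).card ≤ cutRank G A B)
    (G' : SimpleGraph V) (hflip : IsKFlip k G G') :
    {v : V | v ∈ U ∧ {u : V | u ∈ U ∧ G'.Reachable v u}.ncard ≤ k}.ncard ≤ k := by
  classical
  set reach : V → Finset V := fun v => U.filter (G'.Reachable v)
  have hset : {v : V | v ∈ U ∧ {u : V | u ∈ U ∧ G'.Reachable v u}.ncard ≤ k}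
      = ↑(U.filter fun v => #(reach v) ≤ k) := by
    simp [reach, ← coe_filter, Set.ncard_coe_finset]
  rw [hset, Set.ncard_coe_finset]
  by_contra! hsmall
  set S := U.filter fun v => #(reach v) ≤ k
  have hS : S ⊆ S.biUnion reach := fun v hv =>
    mem_biUnion.mpr ⟨v, hv, mem_filter.mpr ⟨(mem_filter.mp hv).1, .rfl⟩⟩
  obtain ⟨t, -, hlow, hhigh⟩ := exists_subset_card_biUnion_mem_Ioc reach S
    (fun v hv => (mem_filter.mp hv).2) (hsmall.trans_le (card_le_card hS))
  set A := univ.filter fun x => ∃ v ∈ t, G'.Reachable v x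
  have hAU : A ∩ U = t.biUnion reach := by
    ext x; simp only [A, reach, mem_inter, mem_filter, mem_univ, true_and, mem_biUnion]; grind
  have hrk : cutRank G A Aᶜ ≤ k := hflip.cutRank_le disjoint_compl_right
    fun a ha b hb hab => by
      obtain ⟨v, hv, hva⟩ := (mem_filter.mp ha).2
      exact (mem_compl.mp hb) (mem_filter.mpr ⟨mem_univ b, v, hv, hva.trans hab.reachable⟩)
  have hcompl : #(Aᶜ ∩ U) + #(A ∩ U) = #U := by
    rw [← card_union_of_disjoint (disjoint_compl_left.mono inter_subset_left inter_subset_left),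
      ← union_inter_distrib_right, union_comm, union_compl, univ_inter]
  have := hwl A Aᶜ disjoint_compl_right (union_compl A)
  rw [hAU] at this hcompl
  omega
end

section
/- Let G be a finite simple graph, let k ∈ ℕ, and let B ⊆ V(G). Let W ⊆ V(G) be a set of at least k+1 vertices with W ∩ B = ∅ such that the sets N_G(w) ∩ B, for w ∈ W, are pairwise distinct. Then for every k-flip G′ of G there exist w ∈ W and b ∈ B that are adjacent in G′. -/
/-- If `W` is a set of at least `k + 1` vertices, disjoint from `B`, whose neighborhood
traces on `B` are pairwise distinct, then every `k`-flip of `G` has an edge between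
`W` and `B`. -/
theorem stmt9 {V : Type*} [Fintype V] (G : SimpleGraph V) (k : ℕ)
    (B W : Set V) (hdisj : W ∩ B = ∅) (hcard : k + 1 ≤ W.ncard)
    (hdistinct : W.Pairwise fun w w' => G.neighborSet w ∩ B ≠ G.neighborSet w' ∩ B)
    (G' : SimpleGraph V) (hflip : IsKFlip k G G') :
    ∃ w ∈ W, ∃ b ∈ B, G'.Adj w b := by
  by_contra h
  push_neg at h
  obtain ⟨c, F, hF, hiff⟩ := hflip
  -- pigeonhole
  have hlt : (Set.univ : Set (Fin k)).ncard < W.ncard := by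
    have : (Set.univ : Set (Fin k)).ncard = k := by
      simp [Set.ncard_univ]
    omega
  obtain ⟨w, hw, w', hw', hne, hc⟩ :=
    Set.exists_ne_map_eq_of_ncard_lt_of_maps_to hlt (f := c) (fun a _ => Set.mem_univ _)
  have hne' := hdistinct hw hw' hne
  -- get b in symmetric difference
  have : ∃ b ∈ B, Xor' (G.Adj w b) (G.Adj w' b) := by
    by_contra hb
    push_neg at hb
    apply hne'
    ext x
    simp only [Set.mem_inter_iff, SimpleGraph.mem_neighborSet]
    constructor
    · rintro ⟨ha, hxB⟩
      refine ⟨?_, hxB⟩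
      by_contra hna
      exact hb x hxB (Or.inl ⟨ha, hna⟩)
    · rintro ⟨ha, hxB⟩
      refine ⟨?_, hxB⟩
      by_contra hna
      exact hb x hxB (Or.inr ⟨ha, hna⟩)
  obtain ⟨b, hb, hxor⟩ := this
  have hwb : w ≠ b := fun e => by
    have : w ∈ W ∩ B := ⟨hw, e ▸ hb⟩
    simp [hdisj] at this
  have hw'b : w' ≠ b := fun e => by
    have : w' ∈ W ∩ B := ⟨hw', e ▸ hb⟩
    simp [hdisj] at this
  have h1 : ¬ Xor' (G.Adj w b) (F (c w) (c b)) := fun hx => h w hw b hb ((hiff w b hwb).2 hx)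
  have h2 : ¬ Xor' (G.Adj w' b) (F (c w') (c b)) := fun hx => h w' hw' b hb ((hiff w' b hw'b).2 hx)
  rw [hc] at h1
  by_cases hFc : F (c w') (c b)
  · rcases hxor with ⟨ha, hna⟩ | ⟨ha, hna⟩
    · exact h2 (Or.inr ⟨hFc, hna⟩)
    · exact h1 (Or.inr ⟨hFc, hna⟩)
  · rcases hxor with ⟨ha, hna⟩ | ⟨ha, hna⟩
    · exact h1 (Or.inl ⟨ha, hFc⟩)
    · exact h2 (Or.inl ⟨ha, hFc⟩)
end

section
/- Fix k, ℓ, m ≥ 1 with m ≤ ℓ. Let H be a finite simple bipartite graph with vertex set V(H) = L ⊎ R, all of whose edges join L to R, such that every vertex of L has degree at least ℓ in H and any two distinct vertices of L have at most m common neighbors in H. Let H′ be a k-flip of H. Then there is a set X ⊆ L with |X| ≥ |L| − k and a bijection π : X → X such that every v ∈ X is adjacent in H′ to at least ⌈(ℓ−m)/2⌉ vertices of N_H(π(v)). -/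

lemma derangement_exists {V : Type*} (T : Set V) (hT : T.Finite) (h : T.ncard ≠ 1) :
    ∃ f : V → V, Set.BijOn f T T ∧ ∀ v ∈ T, f v ≠ v := by
  classical
  rcases Nat.eq_zero_or_pos T.ncard with h0 | hpos
  · have hE : T = ∅ := (Set.ncard_eq_zero hT).mp h0
    exact ⟨id, by simp [hE], by simp [hE]⟩
  · have h2 : 2 ≤ T.ncard := by omega
    haveI := hT.fintype
    have hcard : Fintype.card T = T.ncard := by
      rw [← Nat.card_coe_set_eq, Nat.card_eq_fintype_card]
    let e : T ≃ Fin T.ncard := Fintype.equivFinOfCardEq hcard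
    have hrot0 : ∀ (n : ℕ), 2 ≤ n → ∀ x : Fin n, finRotate n x ≠ x := by
      intro n hn x hx
      match n, hn with
      | (n+1), hn =>
        rw [finRotate_succ_apply] at hx
        have h1 := congrArg Fin.val hx
        rw [Fin.val_add_one] at h1
        split at h1
        · rename_i heq
          have h2 := congrArg Fin.val heq
          rw [Fin.val_last] at h2
          omega
        · omega
    have hrot := hrot0 T.ncard h2
    refine ⟨fun v => if hv : v ∈ T then (e.symm (finRotate _ (e ⟨v, hv⟩)) : V) else v,
      ⟨?_, ?_, ?_⟩, ?_⟩
    · intro v hv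
      simp only [dif_pos hv]
      exact (e.symm _).2
    · intro u hu v hv huv
      simp only [dif_pos hu, dif_pos hv] at huv
      have := e.symm.injective (Subtype.coe_injective huv)
      have := (finRotate _).injective this
      have := e.injective this
      exact congrArg Subtype.val this
    · intro x hx
      refine ⟨(e.symm ((finRotate _).symm (e ⟨x, hx⟩)) : V), (e.symm _).2, ?_⟩
      have hmem : (e.symm ((finRotate _).symm (e ⟨x, hx⟩)) : V) ∈ T := (e.symm _).2
      simp only [dif_pos hmem]
      rw [Subtype.coe_eta, Equiv.apply_symm_apply, Equiv.apply_symm_apply, Equiv.symm_apply_apply]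
    · intro v hv hfv
      simp only [dif_pos hv] at hfv
      have : e.symm (finRotate _ (e ⟨v, hv⟩)) = ⟨v, hv⟩ := Subtype.coe_injective hfv
      have := congrArg e this
      rw [Equiv.apply_symm_apply] at this
      exact hrot _ this


lemma key_lemma {V : Type*} [Fintype V] {k ℓ m : ℕ} (hmℓ : m ≤ ℓ)
    {H H' : SimpleGraph V} {L R : Set V}
    (hdisj : Disjoint L R)
    (hbip : ∀ u v : V, H.Adj u v → (u ∈ L ∧ v ∈ R) ∨ (u ∈ R ∧ v ∈ L))
    (hdeg : ∀ v ∈ L, ℓ ≤ (H.neighborSet v).ncard)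
    (hcommon : ∀ u ∈ L, ∀ v ∈ L, u ≠ v →
      (H.neighborSet u ∩ H.neighborSet v).ncard ≤ m)
    {c : V → Fin k} {F : Fin k → Fin k → Prop}
    (hadj : ∀ u v : V, u ≠ v → (H'.Adj u v ↔ Xor' (H.Adj u v) (F (c u) (c v))))
    {u v : V} (hu : u ∈ L) (hv : v ∈ L) (huv : u ≠ v) (hc : c u = c v)
    (hbad : (H'.neighborSet v ∩ H.neighborSet v).ncard < (ℓ - m + 1) / 2) :
    (ℓ - m + 1) / 2 ≤ (H'.neighborSet u ∩ H.neighborSet v).ncard := by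
  classical
  set t := (ℓ - m + 1) / 2 with ht
  set N := H.neighborSet v with hN
  have hNR : N ⊆ R := by
    intro w hw
    rcases hbip v w hw with ⟨_, hwR⟩ | ⟨hvR, _⟩
    · exact hwR
    · exact absurd hvR (Set.disjoint_left.mp hdisj hv)
  set A : Set V := {w ∈ N | F (c v) (c w)} with hA
  set B : Set V := {w ∈ N | ¬ F (c v) (c w)} with hB
  -- B is contained in H'-neighbors of v inside N
  have hBsub : B ⊆ H'.neighborSet v ∩ N := by
    rintro w ⟨hwN, hwF⟩
    have hvw : H.Adj v w := hwN
    refine ⟨?_, hwN⟩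
    rw [SimpleGraph.mem_neighborSet, hadj v w hvw.ne]
    exact Or.inl ⟨hvw, hwF⟩
  have hBcard : B.ncard < t :=
    lt_of_le_of_lt (Set.ncard_le_ncard hBsub (Set.toFinite _)) hbad
  -- N ⊆ A ∪ B
  have hNAB : N.ncard ≤ A.ncard + B.ncard := by
    have hsub : N ⊆ A ∪ B := by
      intro w hw
      by_cases hF : F (c v) (c w)
      · exact Or.inl ⟨hw, hF⟩
      · exact Or.inr ⟨hw, hF⟩
    exact le_trans (Set.ncard_le_ncard hsub (Set.toFinite _)) (Set.ncard_union_le _ _)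
  -- A minus H-neighbors of u is contained in H'-neighbors of u inside N
  have hAsub : A \ H.neighborSet u ⊆ H'.neighborSet u ∩ N := by
    rintro w ⟨⟨hwN, hwF⟩, hwnu⟩
    have hwR : w ∈ R := hNR hwN
    have huw : u ≠ w := fun h => (Set.disjoint_left.mp hdisj (h ▸ hu)) hwR
    refine ⟨?_, hwN⟩
    rw [SimpleGraph.mem_neighborSet, hadj u w huw]
    exact Or.inr ⟨hc ▸ hwF, hwnu⟩
  have hAcard : (A \ H.neighborSet u).ncard ≤ (H'.neighborSet u ∩ N).ncard :=
    Set.ncard_le_ncard hAsub (Set.toFinite _)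
  -- A ∩ H-neighbors of u has at most m elements
  have hcom : (A ∩ H.neighborSet u).ncard ≤ m := by
    have hsub : A ∩ H.neighborSet u ⊆ H.neighborSet u ∩ H.neighborSet v := by
      rintro w ⟨⟨hwN, _⟩, hwu⟩
      exact ⟨hwu, hwN⟩
    exact le_trans (Set.ncard_le_ncard hsub (Set.toFinite _))
      (hcommon u hu v hv huv)
  have hAsplit : A.ncard ≤ (A \ H.neighborSet u).ncard + (A ∩ H.neighborSet u).ncard := by
    have hsub : A ⊆ (A \ H.neighborSet u) ∪ (A ∩ H.neighborSet u) := by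
      intro w hw
      by_cases hwu : w ∈ H.neighborSet u
      · exact Or.inr ⟨hw, hwu⟩
      · exact Or.inl ⟨hw, hwu⟩
    exact le_trans (Set.ncard_le_ncard hsub (Set.toFinite _)) (Set.ncard_union_le _ _)
  have hdegv : ℓ ≤ N.ncard := hdeg v hv
  omega


/-- Let `H` be bipartite with parts `L, R`, every vertex of `L` of degree at least `ℓ`,
and any two distinct vertices of `L` with at most `m` common neighbors.  For every
`k`-flip `H'` of `H` there is a set `X ⊆ L` with `|X| ≥ |L| - k` and a bijection
`π : X → X` such that every `v ∈ X` is adjacent in `H'` to at least `⌈(ℓ - m)/2⌉`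
vertices of `N_H(π v)`. -/
theorem stmt10 {V : Type*} [Fintype V]
    (k ℓ m : ℕ) (hk : 1 ≤ k) (hℓ : 1 ≤ ℓ) (hm : 1 ≤ m) (hmℓ : m ≤ ℓ)
    (H : SimpleGraph V) (L R : Set V)
    (hdisj : Disjoint L R) (hcover : L ∪ R = Set.univ)
    (hbip : ∀ u v : V, H.Adj u v → (u ∈ L ∧ v ∈ R) ∨ (u ∈ R ∧ v ∈ L))
    (hdeg : ∀ v ∈ L, ℓ ≤ (H.neighborSet v).ncard)
    (hcommon : ∀ u ∈ L, ∀ v ∈ L, u ≠ v →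
      (H.neighborSet u ∩ H.neighborSet v).ncard ≤ m)
    (H' : SimpleGraph V) (hflip : IsKFlip k H H') :
    ∃ X : Set V, X ⊆ L ∧ L.ncard - k ≤ X.ncard ∧
      ∃ π : V → V, Set.BijOn π X X ∧
        ∀ v ∈ X, (ℓ - m + 1) / 2 ≤ (H'.neighborSet v ∩ H.neighborSet (π v)).ncard := by
  classical
  obtain ⟨c, F, hFsymm, hadj⟩ := hflip
  set t := (ℓ - m + 1) / 2 with ht
  -- self-good vertices
  set sg : V → Prop := fun v => t ≤ (H'.neighborSet v ∩ H.neighborSet v).ncard with hsg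
  -- non-self-good vertices of each color class
  set T : Fin k → Set V := fun i => {v | v ∈ L ∧ c v = i ∧ ¬ sg v} with hT
  -- key lemma
  have key : ∀ u v : V, u ∈ L → v ∈ L → u ≠ v → c u = c v → ¬ sg v →
      t ≤ (H'.neighborSet u ∩ H.neighborSet v).ncard := by
    intro u v hu hv huv hc hbad
    exact key_lemma hmℓ hdisj hbip hdeg hcommon hadj hu hv huv hc (by omega)
  -- derangements (or id for classes of size 1)
  have hex : ∀ i : Fin k, ∃ f : V → V,
      (T i).ncard = 1 ∨ (Set.BijOn f (T i) (T i) ∧ ∀ v ∈ T i, f v ≠ v) := by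
    intro i
    by_cases h1 : (T i).ncard = 1
    · exact ⟨id, Or.inl h1⟩
    · obtain ⟨f, hf⟩ := derangement_exists (T i) (Set.toFinite _) h1
      exact ⟨f, Or.inr hf⟩
  choose f hf using hex
  set X : Set V := {v | v ∈ L ∧ (sg v ∨ (T (c v)).ncard ≠ 1)} with hX
  set π : V → V := fun v => if v ∈ L ∧ ¬ sg v then f (c v) v else v with hπ
  have hXL : X ⊆ L := fun v hv => hv.1
  -- elements of T (c v) stay in X and preserve colors
  have hTX : ∀ i, (T i).ncard ≠ 1 → T i ⊆ X := by
    rintro i h1 w ⟨hwL, hwc, hwsg⟩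
    exact ⟨hwL, Or.inr (hwc ▸ h1)⟩
  -- properties of π on the non-self-good kept vertices
  have hπT : ∀ v, v ∈ L → ¬ sg v → (T (c v)).ncard ≠ 1 →
      π v ∈ T (c v) ∧ π v ≠ v := by
    intro v hvL hvsg h1
    have hspec := (hf (c v)).resolve_left h1
    have hvT : v ∈ T (c v) := ⟨hvL, rfl, hvsg⟩
    have : π v = f (c v) v := if_pos ⟨hvL, hvsg⟩
    rw [this]
    exact ⟨hspec.1.1 hvT, hspec.2 v hvT⟩
  have hπid : ∀ v, sg v → π v = v := by
    intro v hv
    exact if_neg (fun h => h.2 hv)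
  -- membership in T determines color and non-self-goodness
  refine ⟨X, hXL, ?_, π, ⟨?_, ?_, ?_⟩, ?_⟩
  · -- cardinality
    set D := L \ X with hD
    have hDT : ∀ v ∈ D, v ∈ T (c v) ∧ (T (c v)).ncard = 1 := by
      rintro v ⟨hvL, hvX⟩
      simp only [hX, Set.mem_setOf_eq, not_and, not_or, not_not] at hvX
      obtain ⟨hvsg, h1⟩ := hvX hvL
      exact ⟨⟨hvL, rfl, hvsg⟩, h1⟩
    have hinj : Set.InjOn c D := by
      intro a ha b hb hab
      obtain ⟨haT, ha1⟩ := hDT a ha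
      obtain ⟨hbT, _⟩ := hDT b hb
      obtain ⟨x, hx⟩ := Set.ncard_eq_one.mp ha1
      rw [hx] at haT
      rw [← hab, hx] at hbT
      rw [Set.mem_singleton_iff] at haT hbT
      rw [haT, hbT]
    have hDcard : D.ncard ≤ k := by
      have := Set.ncard_le_ncard_of_injOn c (fun a _ => Set.mem_univ (c a)) hinj
        (Set.toFinite _)
      rwa [Set.ncard_univ, Nat.card_eq_fintype_card, Fintype.card_fin] at this
    have hXD : X = L \ D := by
      ext v
      constructor
      · intro hv
        exact ⟨hXL hv, fun hd => hd.2 hv⟩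
      · rintro ⟨hvL, hvD⟩
        by_contra hvX
        exact hvD ⟨hvL, hvX⟩
    have : X.ncard = L.ncard - D.ncard := by
      rw [hXD]
      exact Set.ncard_diff (Set.diff_subset) (Set.toFinite _)
    have hDL : D.ncard ≤ L.ncard :=
      Set.ncard_le_ncard Set.diff_subset (Set.toFinite _)
    omega
  · -- MapsTo
    intro v hv
    by_cases hvsg : sg v
    · rw [hπid v hvsg]; exact hv
    · have h1 : (T (c v)).ncard ≠ 1 := (hv.2.resolve_left hvsg)
      exact hTX _ h1 (hπT v hv.1 hvsg h1).1
  · -- InjOn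
    intro u hu v hv huv
    by_cases husg : sg u <;> by_cases hvsg : sg v
    · rw [hπid u husg, hπid v hvsg] at huv; exact huv
    · exfalso
      have h1 : (T (c v)).ncard ≠ 1 := (hv.2.resolve_left hvsg)
      have hπv := (hπT v hv.1 hvsg h1).1
      rw [hπid u husg] at huv
      rw [huv] at husg
      exact hπv.2.2 husg
    · exfalso
      have h1 : (T (c u)).ncard ≠ 1 := (hu.2.resolve_left husg)
      have hπu := (hπT u hu.1 husg h1).1
      rw [hπid v hvsg] at huv
      rw [← huv] at hvsg
      exact hπu.2.2 hvsg
    · have h1u : (T (c u)).ncard ≠ 1 := (hu.2.resolve_left husg)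
      have h1v : (T (c v)).ncard ≠ 1 := (hv.2.resolve_left hvsg)
      have hπu := (hπT u hu.1 husg h1u).1
      have hπv := (hπT v hv.1 hvsg h1v).1
      have hcc : c u = c v := by
        rw [← hπu.2.1, ← hπv.2.1, huv]
      have hspec := (hf (c u)).resolve_left h1u
      have huT : u ∈ T (c u) := ⟨hu.1, rfl, husg⟩
      have hvT : v ∈ T (c u) := ⟨hv.1, hcc.symm, hvsg⟩
      have heq : f (c u) u = f (c u) v := by
        have h1 : π u = f (c u) u := if_pos ⟨hu.1, husg⟩
        have h2 : π v = f (c v) v := if_pos ⟨hv.1, hvsg⟩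
        rw [h1, h2, hcc] at huv
        rw [hcc]
        exact huv
      exact hspec.1.2.1 huT hvT heq
  · -- SurjOn
    intro x hx
    by_cases hxsg : sg x
    · exact ⟨x, hx, hπid x hxsg⟩
    · have h1 : (T (c x)).ncard ≠ 1 := (hx.2.resolve_left hxsg)
      have hspec := (hf (c x)).resolve_left h1
      have hxT : x ∈ T (c x) := ⟨hx.1, rfl, hxsg⟩
      obtain ⟨y, hyT, hyx⟩ := hspec.1.2.2 hxT
      refine ⟨y, hTX _ h1 hyT, ?_⟩
      have : π y = f (c y) y := if_pos ⟨hyT.1, hyT.2.2⟩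
      rw [this, hyT.2.1]
      exact hyx
  · -- adjacency condition
    intro v hv
    by_cases hvsg : sg v
    · rw [hπid v hvsg]; exact hvsg
    · have h1 : (T (c v)).ncard ≠ 1 := (hv.2.resolve_left hvsg)
      obtain ⟨hπvT, hπvne⟩ := hπT v hv.1 hvsg h1
      exact key v (π v) hv.1 hπvT.1 hπvne.symm hπvT.2.1.symm hπvT.2.2
end

section
/- Fix k ≥ 1. Let M be a finite simple graph whose vertex set is the disjoint union of two sets L and R, and whose edge set is a perfect matching between L and R: there is a bijection μ : L → R such that the edges of M are exactly the pairs {x, μ(x)} for x ∈ L. Let M′ be a k-flip of M. Then there exist a set X ⊆ L with |X| ≥ |L| − k and an injective map ψ : X → R such that x is adjacent to ψ(x) in M′ for every x ∈ X. -/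
noncomputable def nextEl {α : Type*} [LinearOrder α] (A : Finset α) (a : α) : α :=
  if h : (A.filter (fun b => a < b)).Nonempty then (A.filter (fun b => a < b)).min' h
  else if h2 : A.Nonempty then A.min' h2 else a

lemma nextEl_mem {α : Type*} [LinearOrder α] {A : Finset α} {a : α} (ha : a ∈ A) :
    nextEl A a ∈ A := by
  unfold nextEl
  split_ifs with h h2
  · exact Finset.mem_of_mem_filter _ (Finset.min'_mem _ h)
  · exact Finset.min'_mem _ h2
  · exact ha

lemma nextEl_ne {α : Type*} [LinearOrder α] {A : Finset α} {a b : α} (ha : a ∈ A)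
    (hb : b ∈ A) (hba : b ≠ a) : nextEl A a ≠ a := by
  unfold nextEl
  split_ifs with h h2
  · exact ne_of_gt (Finset.mem_filter.mp (Finset.min'_mem _ h)).2
  · have hnb : ¬ a < b := fun hab => h ⟨b, Finset.mem_filter.mpr ⟨hb, hab⟩⟩
    have hblt : b < a := lt_of_le_of_ne (not_lt.mp hnb) hba
    exact ne_of_lt (lt_of_le_of_lt (Finset.min'_le _ b hb) hblt)
  · exact absurd ⟨a, ha⟩ h2

lemma nextEl_strict {α : Type*} [LinearOrder α] {A : Finset α} {a b : α} (ha : a ∈ A)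
    (hb : b ∈ A) (hab : a < b) : nextEl A a ≠ nextEl A b := by
  have hFa : (A.filter (fun x => a < x)).Nonempty := ⟨b, Finset.mem_filter.mpr ⟨hb, hab⟩⟩
  have h1 : nextEl A a ≤ b := by
    rw [nextEl, dif_pos hFa]
    exact Finset.min'_le _ b (Finset.mem_filter.mpr ⟨hb, hab⟩)
  have h2 : a < nextEl A a := by
    rw [nextEl, dif_pos hFa]
    exact (Finset.mem_filter.mp (Finset.min'_mem _ hFa)).2
  by_cases hFb : (A.filter (fun x => b < x)).Nonempty
  · have h3 : b < nextEl A b := by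
      rw [nextEl, dif_pos hFb]
      exact (Finset.mem_filter.mp (Finset.min'_mem _ hFb)).2
    exact ne_of_lt (lt_of_le_of_lt h1 h3)
  · have hA : A.Nonempty := ⟨a, ha⟩
    have h3 : nextEl A b ≤ a := by
      rw [nextEl, dif_neg hFb, dif_pos hA]
      exact Finset.min'_le _ a ha
    exact (ne_of_lt (lt_of_le_of_lt h3 h2)).symm

lemma nextEl_injOn {α : Type*} [LinearOrder α] (A : Finset α) :
    Set.InjOn (nextEl A) ↑A := by
  intro a ha b hb h
  rcases lt_trichotomy a b with h1 | h1 | h1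
  · exact absurd h (nextEl_strict ha hb h1)
  · exact h1
  · exact absurd h.symm (nextEl_strict hb ha h1)

/-- If `M` is a perfect matching between `L` and `R` (given by a bijection `μ : L → R`)
and `M'` is a `k`-flip of `M`, then `M'` contains, as a subgraph, a matching between
all but at most `k` vertices of `L` and a subset of `R`. -/
theorem stmt11 {V : Type*} [Fintype V] (k : ℕ) (hk : 1 ≤ k)
    (L R : Set V) (hdisj : Disjoint L R) (hcover : L ∪ R = Set.univ)
    (μ : V → V) (hμ : Set.BijOn μ L R)
    (M : SimpleGraph V)
    (hM : ∀ u v : V, M.Adj u v ↔ (u ∈ L ∧ v = μ u) ∨ (v ∈ L ∧ u = μ v))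
    (M' : SimpleGraph V) (hflip : IsKFlip k M M') :
    ∃ X : Set V, X ⊆ L ∧ L.ncard - k ≤ X.ncard ∧
      ∃ ψ : V → V, Set.InjOn ψ X ∧ Set.MapsTo ψ X R ∧ ∀ x ∈ X, M'.Adj x (ψ x) := by
  classical
  obtain ⟨c, F, hFsymm, hadj⟩ := hflip
  letI : LinearOrder V := LinearOrder.lift' (Fintype.equivFin V) (Equiv.injective _)
  set g : V → Fin k := fun x => c (μ x) with hg
  set Bad : Set V := {x | x ∈ L ∧ F (c x) (c (μ x))} with hBadDef
  set D : Set V := {x | x ∈ Bad ∧ ∀ y ∈ Bad, y ≠ x → g y ≠ g x} with hDDef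
  set B' : Set V := Bad \ D with hB'Def
  have hLR : ∀ x ∈ L, x ∉ R := fun x hx => Set.disjoint_left.mp hdisj hx
  have hμR : ∀ x ∈ L, μ x ∈ R := fun x hx => hμ.mapsTo hx
  have hne_mu : ∀ x ∈ L, x ≠ μ x := by
    intro x hx h
    exact hLR x hx (h ▸ hμR x hx)
  have hBadL : Bad ⊆ L := fun x hx => hx.1
  have hDL : D ⊆ L := fun x hx => hBadL hx.1
  have hB'Bad : B' ⊆ Bad := Set.diff_subset
  -- cardinality bound: D injects into Fin k via g
  have hDk : D.ncard ≤ k := by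
    have hinj : Set.InjOn g D := by
      intro a ha b hb hab
      by_contra hne
      exact hb.2 a ha.1 hne hab
    calc D.ncard = (g '' D).ncard := (Set.ncard_image_of_injOn hinj).symm
      _ ≤ (Set.univ : Set (Fin k)).ncard := Set.ncard_le_ncard (Set.subset_univ _) (Set.toFinite _)
      _ = k := by simp [Set.ncard_univ]
  refine ⟨L \ D, Set.diff_subset, ?_, ?_⟩
  · rw [Set.ncard_diff hDL (Set.toFinite _)]
    exact Nat.sub_le_sub_left hDk _
  -- construction of ψ
  set C : V → Finset V := fun x => Finset.univ.filter (fun y => y ∈ B' ∧ g y = g x) with hCdef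
  set φ : V → V := fun x => nextEl (C x) x with hφdef
  have hmemC : ∀ x ∈ B', x ∈ C x := by
    intro x hx
    simp only [hCdef, Finset.mem_filter, Finset.mem_univ, true_and, and_true]
    exact hx
  have hCmem : ∀ x z, z ∈ C x → z ∈ B' ∧ g z = g x := by
    intro x z hz
    simpa only [hCdef, Finset.mem_filter, Finset.mem_univ, true_and] using hz
  have hbig : ∀ x ∈ B', ∃ y ∈ C x, y ≠ x := by
    intro x hx
    obtain ⟨hxBad, hxD⟩ := hx
    have : ¬ (∀ y ∈ Bad, y ≠ x → g y ≠ g x) := fun h => hxD ⟨hxBad, h⟩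
    push_neg at this
    obtain ⟨y, hyBad, hyne, hgy⟩ := this
    have hyB' : y ∈ B' := by
      refine ⟨hyBad, fun hyD => ?_⟩
      exact hyD.2 x hxBad (Ne.symm hyne) (hgy ▸ rfl)
    refine ⟨y, ?_, hyne⟩
    simp only [hCdef, Finset.mem_filter, Finset.mem_univ, true_and]
    exact ⟨hyB', hgy⟩
  have hφmem : ∀ x ∈ B', φ x ∈ B' ∧ g (φ x) = g x := by
    intro x hx
    exact hCmem x _ (nextEl_mem (hmemC x hx))
  have hφne : ∀ x ∈ B', φ x ≠ x := by
    intro x hx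
    obtain ⟨y, hy, hyne⟩ := hbig x hx
    exact nextEl_ne (hmemC x hx) hy hyne
  have hφinj : Set.InjOn φ B' := by
    intro x hx y hy h
    have hgx := (hφmem x hx).2
    have hgy := (hφmem y hy).2
    have hgxy : g x = g y := by rw [← hgx, h, hgy]
    have hCxy : C x = C y := by
      apply Finset.filter_congr
      intro z _
      rw [hgxy]
    have hx' : x ∈ C x := hmemC x hx
    have hy' : y ∈ C x := by rw [hCxy]; exact hmemC y hy
    have h' : nextEl (C x) x = nextEl (C x) y := by
      rw [hφdef] at h
      simpa [hCxy] using h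
    exact nextEl_injOn (C x) (Finset.mem_coe.mpr hx') (Finset.mem_coe.mpr hy') h'
  set ψ : V → V := fun x => if x ∈ Bad then μ (φ x) else μ x with hψdef
  -- membership in X means good or in B'
  have hXcases : ∀ x ∈ L \ D, x ∈ Bad → x ∈ B' := fun x hx hb => ⟨hb, hx.2⟩
  -- non-adjacency in M between x ∈ L and μ y for y ∈ L different from x
  have hnM : ∀ x ∈ L, ∀ y ∈ L, y ≠ x → ¬ M.Adj x (μ y) := by
    intro x hx y hy hne h
    rcases (hM x (μ y)).mp h with ⟨_, heq⟩ | ⟨hin, _⟩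
    · exact hne (hμ.injOn hy hx heq)
    · exact hLR _ hin (hμR y hy)
  refine ⟨ψ, ?_, ?_, ?_⟩
  · -- injectivity
    intro x hx y hy h
    by_cases hxB : x ∈ Bad <;> by_cases hyB : y ∈ Bad
    · have hx' := hXcases x hx hxB
      have hy' := hXcases y hy hyB
      simp only [hψdef, if_pos hxB, if_pos hyB] at h
      have := hμ.injOn (hBadL (hφmem x hx').1.1) (hBadL (hφmem y hy').1.1) h
      exact hφinj hx' hy' this
    · have hx' := hXcases x hx hxB
      simp only [hψdef, if_pos hxB, if_neg hyB] at h
      have := hμ.injOn (hBadL (hφmem x hx').1.1) hy.1 h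
      exact absurd (this ▸ (hφmem x hx').1.1) hyB
    · have hy' := hXcases y hy hyB
      simp only [hψdef, if_neg hxB, if_pos hyB] at h
      have := hμ.injOn hx.1 (hBadL (hφmem y hy').1.1) h
      exact absurd (this ▸ (hφmem y hy').1.1) hxB
    · simp only [hψdef, if_neg hxB, if_neg hyB] at h
      exact hμ.injOn hx.1 hy.1 h
  · -- maps to R
    intro x hx
    by_cases hxB : x ∈ Bad
    · have hx' := hXcases x hx hxB
      simp only [hψdef, if_pos hxB]
      exact hμR _ (hBadL (hφmem x hx').1.1)
    · simp only [hψdef, if_neg hxB]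
      exact hμR _ hx.1
  · -- adjacency
    intro x hx
    by_cases hxB : x ∈ Bad
    · have hx' := hXcases x hx hxB
      have hyB' : φ x ∈ B' := (hφmem x hx').1
      have hyL : φ x ∈ L := hBadL hyB'.1
      have hxne : x ≠ μ (φ x) := by
        intro h
        exact hLR x hx.1 (h ▸ hμR _ hyL)
      simp only [hψdef, if_pos hxB]
      refine (hadj x (μ (φ x)) hxne).mpr (Or.inr ⟨?_, ?_⟩)
      · have : c (μ (φ x)) = c (μ x) := (hφmem x hx').2
        rw [this]
        exact hxB.2
      · exact hnM x hx.1 (φ x) hyL (hφne x hx')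
    · simp only [hψdef, if_neg hxB]
      refine (hadj x (μ x) (hne_mu x hx.1)).mpr (Or.inl ⟨?_, ?_⟩)
      · exact (hM x (μ x)).mpr (Or.inl ⟨hx.1, rfl⟩)
      · intro hF
        exact hxB ⟨hx.1, hF⟩
end

section
/- Fix k, r, ℓ ≥ 1 and let P be the finite simple graph on vertex set {0,…,r} × {1,…,ℓ} in which (i,j) and (i′,j′) are adjacent if and only if j = j′ and |i − i′| = 1 (so P is the disjoint union of ℓ paths, each of length r; call (0,j) the sources and (r,j) the targets). Then for every k-flip G′ of P, there are at least ℓ − r·k indices j ∈ {1,…,ℓ} such that the target (r,j) is joined to some source (0,j′) by a path of length r in G′. -/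
/-- The disjoint union of `ℓ` paths, each of length `r`, on the vertex set
`Fin (r+1) × Fin ℓ`: `(i, j)` and `(i', j')` are adjacent iff `j = j'` and
`|i - i'| = 1`.  The sources are the vertices `(0, j)`, the targets the vertices
`(r, j)`. -/
def pathsGraph (r ℓ : ℕ) : SimpleGraph (Fin (r + 1) × Fin ℓ) :=
  SimpleGraph.fromRel fun p q => p.2 = q.2 ∧ (p.1 : ℕ) + 1 = (q.1 : ℕ)

open SimpleGraph

lemma ncard_setOf_forall_rel_mem_le {ι : Type*} [Finite ι] {k : ℕ} {R : ι → ι → Prop}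
    {a b : ι → Fin k} {F : Fin k → Fin k → Prop}
    (hR : ∀ z x, R z x ↔ Xor (z = x) (F (a z) (b x))) (D : Set ι) :
    {z | ∀ x, R z x → x ∈ D}.ncard ≤ D.ncard + k := by
  set S := {z | ∀ x, R z x → x ∈ D}
  have hF : ∀ z ∈ S \ D, F (a z) (b z) := by
    rintro z ⟨hzS, hzD⟩
    by_contra hF
    exact hzD (hzS z ((hR z z).2 (Or.inl ⟨rfl, hF⟩)))
  have hinj : Set.InjOn a (S \ D) := by
    intro z₁ hz₁ z₂ hz₂ ha
    by_contra hne
    have hR₁₂ : R z₁ z₂ := (hR z₁ z₂).2 (Or.inr ⟨ha ▸ hF z₂ hz₂, hne⟩)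
    exact hz₂.2 (hz₁.1 z₂ hR₁₂)
  calc S.ncard ≤ (S \ D).ncard + D.ncard := Set.ncard_le_ncard_sdiff_add_ncard S D
    _ ≤ k + D.ncard := by
        gcongr
        simpa using Set.ncard_le_ncard_of_injOn a (fun _ _ => Set.mem_univ _) hinj
    _ = D.ncard + k := add_comm _ _

lemma pathsGraph_adj_succ_castSucc_iff {r ℓ : ℕ} (i : Fin r) (z x : Fin ℓ) :
    (pathsGraph r ℓ).Adj (i.succ, z) (i.castSucc, x) ↔ z = x := by
  simp only [pathsGraph, fromRel_adj, ne_eq, Prod.ext_iff, Fin.ext_iff, Fin.val_succ,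
    Fin.val_castSucc, and_true]
  omega

def blockedColumns {r : ℕ} {α : Type*} (G' : SimpleGraph (Fin (r + 1) × α)) :
    Fin (r + 1) → Set α :=
  Fin.induction ∅ fun i D => {z | ∀ x, G'.Adj (i.succ, z) (i.castSucc, x) → x ∈ D}

section blockedColumns

variable {r : ℕ} {α : Type*} (G' : SimpleGraph (Fin (r + 1) × α))

@[simp] lemma blockedColumns_zero : blockedColumns G' 0 = ∅ :=
  Fin.induction_zero (motive := fun _ => Set α) _ _

lemma blockedColumns_succ (i : Fin r) :
    blockedColumns G' i.succ =
      {z | ∀ x, G'.Adj (i.succ, z) (i.castSucc, x) → x ∈ blockedColumns G' i.castSucc} :=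
  Fin.induction_succ (motive := fun _ => Set α) _ _ i

lemma exists_descending_path_of_notMem_blockedColumns (i : Fin (r + 1)) {z : α}
    (hz : z ∉ blockedColumns G' i) :
    ∃ (j : α) (p : G'.Walk (i, z) (0, j)), p.IsPath ∧ p.length = i ∧ ∀ v ∈ p.support, v.1 ≤ i := by
  induction i using Fin.induction generalizing z with
  | zero => exact ⟨z, .nil, .nil, rfl, by simp⟩
  | succ i ih =>
    obtain ⟨x, hadj, hx⟩ : ∃ x, G'.Adj (i.succ, z) (i.castSucc, x) ∧
        x ∉ blockedColumns G' i.castSucc := by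
      simpa [blockedColumns_succ] using hz
    obtain ⟨j, p, hp, hlen, hlevel⟩ := ih hx
    refine ⟨j, .cons hadj p, hp.cons fun hmem => ?_, by simp [hlen], ?_⟩
    · exact (hlevel _ hmem).not_gt (Fin.castSucc_lt_succ)
    · simp only [Walk.support_cons, List.mem_cons, forall_eq_or_imp, le_refl, true_and]
      exact fun v hv => (hlevel v hv).trans (Fin.castSucc_le_succ i)

end blockedColumns

lemma ncard_blockedColumns_le {k r ℓ : ℕ} {G' : SimpleGraph (Fin (r + 1) × Fin ℓ)}
    (hflip : IsKFlip k (pathsGraph r ℓ) G') (i : Fin (r + 1)) :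
    (blockedColumns G' i).ncard ≤ i * k := by
  obtain ⟨c, F, -, hadj⟩ := hflip
  induction i using Fin.induction with
  | zero => simp
  | succ i ih =>
    have hR : ∀ z x, G'.Adj (i.succ, z) (i.castSucc, x) ↔
        Xor (z = x) (F (c (i.succ, z)) (c (i.castSucc, x))) := fun z x => by
      rw [hadj _ _ fun h => Fin.castSucc_lt_succ.ne' (congrArg Prod.fst h),
        pathsGraph_adj_succ_castSucc_iff]
      rfl
    calc (blockedColumns G' i.succ).ncard ≤ (blockedColumns G' i.castSucc).ncard + k := by
          rw [blockedColumns_succ]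
          exact ncard_setOf_forall_rel_mem_le hR _
      _ ≤ i.succ * k := by
          rw [Fin.val_succ, add_one_mul]
          exact Nat.add_le_add_right ih k

theorem stmt12_general (k r ℓ : ℕ)
    (G' : SimpleGraph (Fin (r + 1) × Fin ℓ))
    (hflip : IsKFlip k (pathsGraph r ℓ) G') :
    ℓ - r * k ≤ {j : Fin ℓ | ∃ j' : Fin ℓ,
      ∃ p : G'.Walk (Fin.last r, j) (0, j'), p.IsPath ∧ p.length = r}.ncard := by
  set B := blockedColumns G' (Fin.last r)
  have hB : B.ncard ≤ r * k := by simpa using ncard_blockedColumns_le hflip (Fin.last r)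
  have hBc : Bᶜ ⊆ {j : Fin ℓ | ∃ j' : Fin ℓ,
      ∃ p : G'.Walk (Fin.last r, j) (0, j'), p.IsPath ∧ p.length = r} := fun j hj => by
    obtain ⟨j', p, hp, hlen, -⟩ := exists_descending_path_of_notMem_blockedColumns G' _ hj
    exact ⟨j', p, hp, by simpa using hlen⟩
  calc ℓ - r * k ≤ ℓ - B.ncard := Nat.sub_le_sub_left hB ℓ
    _ = Bᶜ.ncard := by rw [Set.ncard_compl, Nat.card_fin]
    _ ≤ _ := Set.ncard_le_ncard hBc

/-- For every `k`-flip `G'` of the disjoint union of `ℓ` paths of length `r`, at least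
`ℓ - r * k` targets are joined to some source by a path of length `r` in `G'`. -/
theorem stmt12 (k r ℓ : ℕ) (hk : 1 ≤ k) (hr : 1 ≤ r) (hℓ : 1 ≤ ℓ)
    (G' : SimpleGraph (Fin (r + 1) × Fin ℓ))
    (hflip : IsKFlip k (pathsGraph r ℓ) G') :
    ℓ - r * k ≤ {j : Fin ℓ | ∃ j' : Fin ℓ,
      ∃ p : G'.Walk (Fin.last r, j) (0, j'), p.IsPath ∧ p.length = r}.ncard :=
  stmt12_general k r ℓ G' hflip
end

section
/- Fix t ≥ 1 and let G be a finite simple graph that does not contain K_{t,t} as a subgraph. Then for every finite set S ⊆ V(G), the number of distinct neighborhood traces on S satisfies |{N_G(v) ∩ S : v ∈ V(G)}| ≤ (t−1)·C(|S|, t) + Σ_{i=0}^{t−1} C(|S|, i), where C(n,j) denotes the binomial coefficient. -/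
/-!
Count the traces `N(v) ∩ S` by size. Those with fewer than `t` elements are among the
`∑_{i<t} C(|S|, i)` small subsets of `S`. Every other trace contains a `t`-subset `T` of `S`,
and a trace containing `T` is the trace of a common neighbour of `T`; since `G` has no
`K_{t,t}`, `T` has at most `t - 1` common neighbours, so each of the `C(|S|, t)` choices of
`T` accounts for at most `t - 1` traces.
-/

open Finset

namespace Finset

variable {α : Type*} [DecidableEq α]

lemma card_filter_card_lt_le_sum_choose (F : Finset (Finset α)) (S : Finset α)
    (hF : ∀ A ∈ F, A ⊆ S) (t : ℕ) :
    #(F.filter (#· < t)) ≤ ∑ i ∈ range t, (#S).choose i := by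
  have hsub : F.filter (#· < t) ⊆ (range t).biUnion (S.powersetCard ·) := by
    intro A hA
    obtain ⟨hAF, hAt⟩ := mem_filter.1 hA
    exact mem_biUnion.2 ⟨#A, mem_range.2 hAt, mem_powersetCard.2 ⟨hF A hAF, rfl⟩⟩
  calc #(F.filter (#· < t)) ≤ #((range t).biUnion (S.powersetCard ·)) := card_le_card hsub
    _ ≤ ∑ i ∈ range t, #(S.powersetCard i) := card_biUnion_le
    _ = ∑ i ∈ range t, (#S).choose i := by simp only [card_powersetCard]

lemma card_filter_card_ge_le_mul_choose (F : Finset (Finset α)) (S : Finset α)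
    (hF : ∀ A ∈ F, A ⊆ S) (t k : ℕ)
    (hk : ∀ T ∈ S.powersetCard t, #(F.filter (T ⊆ ·)) ≤ k) :
    #(F.filter (t ≤ #·)) ≤ k * (#S).choose t := by
  have hsub : F.filter (t ≤ #·) ⊆ (S.powersetCard t).biUnion (fun T => F.filter (T ⊆ ·)) := by
    intro A hA
    obtain ⟨hAF, hAt⟩ := mem_filter.1 hA
    obtain ⟨T, hTA, hTt⟩ := exists_subset_card_eq hAt
    exact mem_biUnion.2 ⟨T, mem_powersetCard.2 ⟨hTA.trans (hF A hAF), hTt⟩,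
      mem_filter.2 ⟨hAF, hTA⟩⟩
  calc #(F.filter (t ≤ #·))
      ≤ #((S.powersetCard t).biUnion (fun T => F.filter (T ⊆ ·))) := card_le_card hsub
    _ ≤ ∑ T ∈ S.powersetCard t, #(F.filter (T ⊆ ·)) := card_biUnion_le
    _ ≤ #(S.powersetCard t) * k := sum_le_card_nsmul _ _ _ hk
    _ = k * (#S).choose t := by rw [card_powersetCard, mul_comm]

theorem card_le_of_card_filter_superset_le (F : Finset (Finset α)) (S : Finset α)
    (hF : ∀ A ∈ F, A ⊆ S) (t k : ℕ)
    (hk : ∀ T ∈ S.powersetCard t, #(F.filter (T ⊆ ·)) ≤ k) :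
    #F ≤ k * (#S).choose t + ∑ i ∈ range t, (#S).choose i := by
  rw [← card_filter_add_card_filter_not (t ≤ #·)]
  simp only [not_le]
  exact add_le_add (card_filter_card_ge_le_mul_choose F S hF t k hk)
    (card_filter_card_lt_le_sum_choose F S hF t)

end Finset

namespace SimpleGraph

variable {V : Type*} (G : SimpleGraph V)

def ContainsBiclique (t : ℕ) : Prop :=
  ∃ S T : Finset V, Disjoint S T ∧ #S = t ∧ #T = t ∧ ∀ s ∈ S, ∀ u ∈ T, G.Adj s u

section CommonNeighbors

variable [Fintype V] [DecidableRel G.Adj]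

def commonNeighborFinset (T : Finset V) : Finset V := univ.filter fun v => ∀ x ∈ T, G.Adj v x

lemma mem_commonNeighborFinset {T : Finset V} {v : V} :
    v ∈ G.commonNeighborFinset T ↔ ∀ x ∈ T, G.Adj v x := by
  simp [commonNeighborFinset]

lemma card_commonNeighborFinset_lt {t : ℕ} (hG : ¬ G.ContainsBiclique t) {T : Finset V}
    (hT : #T = t) : #(G.commonNeighborFinset T) < t := by
  by_contra! h
  obtain ⟨W, hW, hWt⟩ := exists_subset_card_eq h
  have hWadj : ∀ w ∈ W, ∀ x ∈ T, G.Adj w x := fun w hw => G.mem_commonNeighborFinset.1 (hW hw)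
  exact hG ⟨W, T, Finset.disjoint_left.2 fun _ hvW hvT => G.irrefl (hWadj _ hvW _ hvT),
    hWt, hT, hWadj⟩

end CommonNeighbors

variable [DecidableRel G.Adj]

def neighborTrace (S : Finset V) (v : V) : Finset V := S.filter (G.Adj v)

lemma coe_neighborTrace (S : Finset V) (v : V) :
    (G.neighborTrace S v : Set V) = G.neighborSet v ∩ S := by
  ext x
  simp [neighborTrace, and_comm]

lemma neighborTrace_subset (S : Finset V) (v : V) : G.neighborTrace S v ⊆ S := filter_subset _ S

variable [Fintype V] [DecidableEq V]

lemma card_filter_superset_neighborTrace_lt {t : ℕ} (hG : ¬ G.ContainsBiclique t)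
    (S T : Finset V) (hT : #T = t) :
    #((univ.image (G.neighborTrace S)).filter (T ⊆ ·)) < t := by
  have hsub : (univ.image (G.neighborTrace S)).filter (T ⊆ ·) ⊆
      (G.commonNeighborFinset T).image (G.neighborTrace S) := by
    intro A hA
    obtain ⟨hAim, hTA⟩ := mem_filter.1 hA
    obtain ⟨v, -, rfl⟩ := mem_image.1 hAim
    exact mem_image.2 ⟨v, G.mem_commonNeighborFinset.2 fun x hx => (mem_filter.1 (hTA hx)).2, rfl⟩
  exact (card_le_card hsub).trans_lt
    (card_image_le.trans_lt (G.card_commonNeighborFinset_lt hG hT))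

lemma ncard_range_neighborSet_inter (S : Finset V) :
    (Set.range fun v => G.neighborSet v ∩ (S : Set V)).ncard =
      #(univ.image (G.neighborTrace S)) := by
  have hrange : Set.range (G.neighborTrace S) = ↑(univ.image (G.neighborTrace S)) := by simp
  simp_rw [← coe_neighborTrace]
  rw [Set.range_comp' ((↑) : Finset V → Set V), Set.ncard_image_of_injective _ coe_injective,
    hrange, Set.ncard_coe_finset]

end SimpleGraph

theorem stmt13_general {V : Type*} [Fintype V] (t : ℕ) (G : SimpleGraph V)
    (hktt : ¬ ∃ S T : Finset V, Disjoint S T ∧ S.card = t ∧ T.card = t ∧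
      ∀ s ∈ S, ∀ u ∈ T, G.Adj s u)
    (S : Finset V) :
    (Set.range fun v : V => G.neighborSet v ∩ (S : Set V)).ncard ≤
      (t - 1) * Nat.choose S.card t + ∑ i ∈ Finset.range t, Nat.choose S.card i := by
  classical
  have hG : ¬ G.ContainsBiclique t := hktt
  rw [G.ncard_range_neighborSet_inter S]
  refine card_le_of_card_filter_superset_le _ S
    (forall_mem_image.2 fun v _ => G.neighborTrace_subset S v) t (t - 1) fun T hT => ?_
  exact Nat.le_sub_one_of_lt
    (G.card_filter_superset_neighborTrace_lt hG S T (mem_powersetCard.1 hT).2)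

/-- If a finite graph `G` does not contain `K_{t,t}` as a subgraph, then for every
finite set `S` of vertices, the number of distinct neighborhood traces on `S` is at
most `(t - 1) * C(|S|, t) + ∑_{i < t} C(|S|, i)`. -/
theorem stmt13 {V : Type*} [Fintype V] (t : ℕ) (ht : 1 ≤ t) (G : SimpleGraph V)
    (hktt : ¬ ∃ S T : Finset V, Disjoint S T ∧ S.card = t ∧ T.card = t ∧
      ∀ s ∈ S, ∀ u ∈ T, G.Adj s u)
    (S : Finset V) :
    (Set.range fun v : V => G.neighborSet v ∩ (S : Set V)).ncard ≤
      (t - 1) * Nat.choose S.card t + ∑ i ∈ Finset.range t, Nat.choose S.card i :=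
  stmt13_general t G hktt S
end

section
/- Fix t ≥ 1 and δ ∈ ℕ. Let G be a finite simple graph and let U ⊆ V(G) be a set of exactly t vertices that are pairwise δ-near-twins. If some vertex v ∈ U has degree at least (t−1)·δ + 2t in G, then G contains K_{t,t} as a subgraph. -/
/-!
Let `W` be the set of neighbours of `v` that lie neither in `U` nor in any of the sets
`N(u) ∆ N(v)` with `u ∈ U \ {v}`. Every vertex of `W` is adjacent to all of `U`, and
`|W| ≥ deg v - |U| - (|U| - 1) δ ≥ t`, so `U` together with any `t` vertices of `W`
spans a `K_{t,t}`.
-/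

open scoped symmDiff

lemma Set.Finite.ncard_biUnion_le_ncard_mul {ι α : Type*} {t : Set ι} (ht : t.Finite)
    (s : ι → Set α) {δ : ℕ} (h : ∀ i ∈ t, (s i).ncard ≤ δ) :
    (⋃ i ∈ t, s i).ncard ≤ t.ncard * δ := by
  lift t to Finset ι using ht
  simpa using (t.set_ncard_biUnion_le s).trans (by simpa using t.sum_le_card_nsmul _ δ h)

namespace SimpleGraph

variable {V : Type*} (G : SimpleGraph V)

def twinCommonNeighborSet (U : Set V) (v : V) : Set V :=
  G.neighborSet v \ (U ∪ ⋃ u ∈ U \ {v}, G.neighborSet u ∆ G.neighborSet v)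

variable {G} {U : Set V} {v : V}

lemma disjoint_twinCommonNeighborSet : Disjoint U (G.twinCommonNeighborSet U v) :=
  Set.disjoint_left.2 fun _ hu hw => hw.2 (Or.inl hu)

lemma adj_of_mem_twinCommonNeighborSet {u w : V} (hu : u ∈ U)
    (hw : w ∈ G.twinCommonNeighborSet U v) : G.Adj u w := by
  obtain ⟨hvw, hwU⟩ := hw
  by_cases huv : u = v
  · exact huv ▸ hvw
  · by_contra hnadj
    exact hwU (Or.inr (Set.mem_biUnion ⟨hu, huv⟩ (Set.mem_symmDiff.2 (Or.inr ⟨hvw, hnadj⟩))))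

lemma ncard_neighborSet_le_ncard_twinCommonNeighborSet_add [Finite V] {δ : ℕ} (hv : v ∈ U)
    (htwins : U.Pairwise fun u v => ((G.neighborSet u) ∆ (G.neighborSet v)).ncard ≤ δ) :
    (G.neighborSet v).ncard ≤
      (G.twinCommonNeighborSet U v).ncard + U.ncard + (U.ncard - 1) * δ := by
  have hdefect : (⋃ u ∈ U \ {v}, G.neighborSet u ∆ G.neighborSet v).ncard ≤
      (U.ncard - 1) * δ := by
    rw [← Set.ncard_sdiff_singleton_of_mem hv]
    exact (Set.toFinite _).ncard_biUnion_le_ncard_mul _ fun u hu => htwins hu.1 hv hu.2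
  calc (G.neighborSet v).ncard
      ≤ (G.twinCommonNeighborSet U v).ncard +
          (U ∪ ⋃ u ∈ U \ {v}, G.neighborSet u ∆ G.neighborSet v).ncard :=
        Set.ncard_le_ncard_sdiff_add_ncard _ _
    _ ≤ (G.twinCommonNeighborSet U v).ncard + U.ncard + (U.ncard - 1) * δ := by
        have := Set.ncard_union_le U (⋃ u ∈ U \ {v}, G.neighborSet u ∆ G.neighborSet v)
        omega

end SimpleGraph

open SimpleGraph in
theorem stmt14_general {V : Type*} [Fintype V] (t δ : ℕ) (G : SimpleGraph V)
    (U : Set V) (hcard : U.ncard = t)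
    (htwins : U.Pairwise fun u v =>
      ((G.neighborSet u) ∆ (G.neighborSet v)).ncard ≤ δ)
    (v : V) (hv : v ∈ U) (hdeg : (t - 1) * δ + 2 * t ≤ (G.neighborSet v).ncard) :
    ∃ S T : Finset V, Disjoint S T ∧ S.card = t ∧ T.card = t ∧
      ∀ s ∈ S, ∀ u ∈ T, G.Adj s u := by
  classical
  have hW : t ≤ (G.twinCommonNeighborSet U v).ncard := by
    have := ncard_neighborSet_le_ncard_twinCommonNeighborSet_add hv htwins
    rw [hcard] at this
    omega
  obtain ⟨T, hTW, hTcard⟩ := Set.exists_subset_card_eq hW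
  refine ⟨U.toFinset, T.toFinset, ?_, ?_, ?_, ?_⟩
  · simpa using disjoint_twinCommonNeighborSet.mono_right hTW
  · rwa [← Set.ncard_eq_toFinset_card']
  · rwa [← Set.ncard_eq_toFinset_card']
  · simpa using fun u hu w hw => adj_of_mem_twinCommonNeighborSet hu (hTW hw)

/-- If `U` is a set of exactly `t ≥ 1` vertices that are pairwise `δ`-near-twins, and
some `v ∈ U` has degree at least `(t - 1) * δ + 2 * t`, then `G` contains `K_{t,t}`
as a subgraph. -/
theorem stmt14 {V : Type*} [Fintype V] (t δ : ℕ) (ht : 1 ≤ t) (G : SimpleGraph V)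
    (U : Set V) (hcard : U.ncard = t)
    (htwins : U.Pairwise fun u v =>
      ((G.neighborSet u) ∆ (G.neighborSet v)).ncard ≤ δ)
    (v : V) (hv : v ∈ U) (hdeg : (t - 1) * δ + 2 * t ≤ (G.neighborSet v).ncard) :
    ∃ S T : Finset V, Disjoint S T ∧ S.card = t ∧ T.card = t ∧
      ∀ s ∈ S, ∀ u ∈ T, G.Adj s u :=
  stmt14_general t δ G U hcard htwins v hv hdeg
end

section
/- Fix k ≥ 1. Let (V, <) be a finite linearly ordered set, let c : V → {1,…,k} be any map and let F be any binary relation on {1,…,k}. Define the flipped relation <′ on V by: u <′ v if and only if exactly one of (u < v) and F(c(u), c(v)) holds; and let G′ be the graph on V in which distinct u, v are adjacent if and only if u <′ v or v <′ u. Then there exists a set S ⊆ V with |S| ≤ k such that any two distinct vertices u, v ∈ V ∖ S with no element of S strictly between them (in the order <) are at distance at most 2 in G′, i.e., they are adjacent in G′ or have a common neighbor in G′. -/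
private lemma stmt15_aux {V : Type*} [Fintype V] [LinearOrder V]
    (k : ℕ) (c : V → Fin k) (F : Fin k → Fin k → Prop)
    (G' : SimpleGraph V)
    (hG' : ∀ u v : V, G'.Adj u v ↔ u ≠ v ∧
      (Xor' (u < v) (F (c u) (c v)) ∨ Xor' (v < u) (F (c v) (c u))))
    (S : Finset V) (hS : S = Finset.univ.filter (fun x => ∀ y, c y = c x → x ≤ y))
    (u v : V) (hu : u ∉ S) (hv : v ∉ S) (huv : u < v)
    (hbet : ∀ s ∈ S, ¬ (u < s ∧ s < v)) :
    G'.Adj u v ∨ ∃ w : V, G'.Adj u w ∧ G'.Adj w v := by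
  by_cases hadj : G'.Adj u v
  · exact Or.inl hadj
  · -- nonadjacency gives F (c u) (c v) ∧ ¬ F (c v) (c u)
    rw [hG'] at hadj
    push_neg at hadj
    have hne : u ≠ v := ne_of_lt huv
    have h := hadj hne
    have hF1 : F (c u) (c v) := by
      by_contra hF
      exact h.1 (Or.inl ⟨huv, hF⟩)
    have hF2 : ¬ F (c v) (c u) := by
      intro hF
      exact h.2 (Or.inr ⟨hF, not_lt.mpr huv.le⟩)
    -- t := minimum of v's color class
    have hne' : (Finset.univ.filter (fun x => c x = c v)).Nonempty :=
      ⟨v, by simp⟩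
    set t := (Finset.univ.filter (fun x => c x = c v)).min' hne' with ht
    have htmem : t ∈ Finset.univ.filter (fun x => c x = c v) := Finset.min'_mem _ _
    have htc : c t = c v := (Finset.mem_filter.mp htmem).2
    have htS : t ∈ S := by
      rw [hS, Finset.mem_filter]
      refine ⟨Finset.mem_univ _, fun y hy => ?_⟩
      exact Finset.min'_le _ _ (Finset.mem_filter.mpr ⟨Finset.mem_univ _, by rw [hy, htc]⟩)
    have htv : t ≠ v := fun h => hv (h ▸ htS)
    have htlev : t ≤ v := Finset.min'_le _ _ (by simp)
    have htltv : t < v := lt_of_le_of_ne htlev htv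
    have htu : t ≠ u := fun h => hu (h ▸ htS)
    have htltu : t < u := by
      rcases lt_or_ge t u with h | h
      · exact h
      · exact absurd ⟨lt_of_le_of_ne h (Ne.symm htu), htltv⟩ (hbet t htS)
    refine Or.inr ⟨t, ?_, ?_⟩
    · rw [hG']
      refine ⟨htu.symm, Or.inr ?_⟩
      rw [htc]
      exact Or.inl ⟨htltu, hF2⟩
    · rw [hG']
      refine ⟨htv, ?_⟩
      rw [htc]
      by_cases hFvv : F (c v) (c v)
      · exact Or.inr (Or.inr ⟨hFvv, not_lt.mpr htltv.le⟩)
      · exact Or.inl (Or.inl ⟨htltv, hFvv⟩)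

/-- Let `(V, <)` be a finite linear order, `c : V → Fin k` a coloring and `F` a binary
relation on `Fin k`.  Let `G'` be the Gaifman graph of the flipped order: distinct
`u, v` are adjacent iff `Xor' (u < v) (F (c u) (c v))` or `Xor' (v < u) (F (c v) (c u))`.
Then there is a set `S` of at most `k` vertices such that any two distinct vertices
outside `S` with no element of `S` strictly between them are at distance at most `2`
in `G'`. -/
theorem stmt15 {V : Type*} [Fintype V] [LinearOrder V]
    (k : ℕ) (hk : 1 ≤ k) (c : V → Fin k) (F : Fin k → Fin k → Prop)
    (G' : SimpleGraph V)
    (hG' : ∀ u v : V, G'.Adj u v ↔ u ≠ v ∧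
      (Xor' (u < v) (F (c u) (c v)) ∨ Xor' (v < u) (F (c v) (c u)))) :
    ∃ S : Finset V, S.card ≤ k ∧
      ∀ u v : V, u ∉ S → v ∉ S → u ≠ v →
        (∀ s ∈ S, ¬ (min u v < s ∧ s < max u v)) →
        (G'.Adj u v ∨ ∃ w : V, G'.Adj u w ∧ G'.Adj w v) := by
  set S : Finset V := Finset.univ.filter (fun x => ∀ y, c y = c x → x ≤ y) with hS
  refine ⟨S, ?_, ?_⟩
  · have : Set.InjOn c S := by
      intro a ha b hb hab
      rw [hS, Finset.coe_filter] at ha hb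
      exact le_antisymm (ha.2 b hab.symm) (hb.2 a hab)
    calc S.card = (S.image c).card := (Finset.card_image_of_injOn this).symm
      _ ≤ Fintype.card (Fin k) := Finset.card_le_univ _
      _ = k := Fintype.card_fin k
  · intro u v hu hv huv hbet
    rcases lt_or_gt_of_ne huv with h | h
    · have hbet' : ∀ s ∈ S, ¬ (u < s ∧ s < v) := by
        intro s hs
        have := hbet s hs
        rwa [min_eq_left h.le, max_eq_right h.le] at this
      exact stmt15_aux k c F G' hG' S hS u v hu hv h hbet'
    · have hbet' : ∀ s ∈ S, ¬ (v < s ∧ s < u) := by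
        intro s hs
        have := hbet s hs
        rwa [min_eq_right h.le, max_eq_left h.le] at this
      rcases stmt15_aux k c F G' hG' S hS v u hv hu h hbet' with h' | ⟨w, hw1, hw2⟩
      · exact Or.inl h'.symm
      · exact Or.inr ⟨w, hw2.symm, hw1.symm⟩
end

section
/- Fix k, r ∈ ℕ and a finite simple graph G. A (k,r)-hideout in G is a nonempty set U ⊆ V(G) such that for every v ∈ U and every set A ⊆ V(G) ∖ {v} with |A| < k, there is a walk of length at most r in G from v to some vertex of U ∖ {v} that avoids A (none of its vertices lies in A). Then the following are equivalent: (i) G has no (k,r)-hideout; (ii) there is a linear order on V(G) such that for every vertex v there exists a set A ⊆ V(G) ∖ {v} with |A| < k such that no walk of length at most r in G that avoids A joins v to a vertex w with w < v. -/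
/-!
Call `v` *escaping into* `S` if no set of fewer than `k` vertices avoiding `v` cuts all walks
of length at most `r` from `v` to `S \ {v}`; a hideout is a nonempty `U` all of whose vertices
escape into `U`. Escaping is monotone in `S`. If there is no hideout, every
nonempty set has a vertex not escaping into it; peeling such vertices off one by one and placing
each above all remaining ones yields the order. Conversely, the maximum `v` of a hideout would
escape into the hideout, hence into `Iic v`, which the order forbids.
-/

section Peeling

variable {V : Type*} {E : V → Set V → Prop}

theorem Finset.exists_injOn_nat_forall_not_le (hE : ∀ v, Monotone (E v))
    (hpeel : ∀ U : Finset V, U.Nonempty → ∃ v ∈ U, ¬ E v U) (S : Finset V) :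
    ∃ f : V → ℕ, Set.InjOn f S ∧ ∀ v ∈ S, ¬ E v {w | w ∈ S ∧ f w ≤ f v} := by
  classical
  induction S using Finset.strongInduction with
  | H S ih =>
  rcases S.eq_empty_or_nonempty with rfl | hS
  · exact ⟨fun _ => 0, by simp, by simp⟩
  obtain ⟨v, hvS, hv⟩ := hpeel S hS
  obtain ⟨f, hf, hfE⟩ := ih (S.erase v) (Finset.erase_ssubset hvS)
  set g := Function.update f v ((S.erase v).sup f + 1)
  have hgf : Set.EqOn f g (S.erase v) := fun w hw =>
    (Function.update_of_ne (Finset.ne_of_mem_erase hw) _ _).symm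
  have hgv : ∀ w ∈ S.erase v, g w < g v := fun w hw => by
    simpa [← hgf hw, g] using Nat.lt_succ_of_le (Finset.le_sup hw)
  refine ⟨g, ?_, fun w hw => ?_⟩
  · rw [← Finset.insert_erase hvS, Finset.coe_insert, Set.injOn_insert (by simp)]
    exact ⟨hf.congr hgf, fun ⟨w, hw, hwv⟩ => (hgv w hw).ne hwv⟩
  · by_cases hwv : w = v
    · subst hwv
      exact fun h => hv (hE w (fun x hx => hx.1) h)
    · have hw' : w ∈ S.erase v := Finset.mem_erase.2 ⟨hwv, hw⟩
      refine fun h => hfE w hw' (hE w ?_ h)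
      rintro x ⟨hxS, hxw⟩
      have hxv : x ≠ v := by
        rintro rfl
        exact (hgv w hw').not_ge hxw
      have hx' : x ∈ S.erase v := Finset.mem_erase.2 ⟨hxv, hxS⟩
      exact ⟨hx', by rwa [hgf hx', hgf hw']⟩

theorem exists_linearOrder_forall_not_Iic [Finite V] (hE : ∀ v, Monotone (E v))
    (hnone : ¬ ∃ U : Set V, U.Nonempty ∧ ∀ v ∈ U, E v U) :
    ∃ _ : LinearOrder V, ∀ v, ¬ E v (Set.Iic v) := by
  have : Fintype V := Fintype.ofFinite V
  push Not at hnone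
  have hpeel (U : Finset V) (hU : U.Nonempty) : ∃ v ∈ U, ¬ E v U := by
    simpa using hnone U (Finset.coe_nonempty.2 hU)
  obtain ⟨f, hf, hfE⟩ := Finset.univ.exists_injOn_nat_forall_not_le hE hpeel
  rw [Finset.coe_univ, Set.injOn_univ] at hf
  refine ⟨LinearOrder.lift' f hf, fun v => ?_⟩
  have hv := hfE v (Finset.mem_univ v)
  simp only [Finset.mem_univ, true_and] at hv
  exact hv

theorem not_exists_forall_of_forall_not_Iic [LinearOrder V] [Finite V]
    (hE : ∀ v, Monotone (E v)) (hIic : ∀ v, ¬ E v (Set.Iic v)) :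
    ¬ ∃ U : Set V, U.Nonempty ∧ ∀ v ∈ U, E v U := by
  rintro ⟨U, hU, hUE⟩
  obtain ⟨v, hvU, hmax⟩ := Set.exists_max_image U id U.toFinite hU
  exact hIic v (hE v hmax (hUE v hvU))

end Peeling

namespace SimpleGraph

variable {V : Type*} (G : SimpleGraph V) (k r : ℕ)

def EscapesInto (v : V) (S : Set V) : Prop :=
  ∀ A : Finset V, v ∉ A → A.card < k →
    ∃ u ∈ S, u ≠ v ∧ ∃ p : G.Walk v u, p.length ≤ r ∧ ∀ x ∈ p.support, x ∉ A

theorem escapesInto_monotone (v : V) : Monotone (G.EscapesInto k r v) :=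
  fun _ _ hST hS A hvA hAk =>
    let ⟨u, hu, huv, hp⟩ := hS A hvA hAk
    ⟨u, hST hu, huv, hp⟩

theorem not_escapesInto_Iic_iff [LinearOrder V] (v : V) :
    ¬ G.EscapesInto k r v (Set.Iic v) ↔ ∃ A : Finset V, v ∉ A ∧ A.card < k ∧
      ∀ w, w < v → ¬ ∃ p : G.Walk v w, p.length ≤ r ∧ ∀ x ∈ p.support, x ∉ A := by
  simp only [EscapesInto, Set.mem_Iic, lt_iff_le_and_ne (α := V), and_imp]
  push Not
  rfl

end SimpleGraph

/-- A finite graph `G` has no `(k, r)`-hideout (a nonempty set `U` such that every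
`v ∈ U` can, for every blocking set `A` of fewer than `k` vertices not containing `v`,
reach some other vertex of `U` by a walk of length at most `r` avoiding `A`) if and
only if there is a linear order on `V(G)` such that every vertex `v` admits a blocking
set `A` of fewer than `k` vertices (with `v ∉ A`) cutting all walks of length at most
`r` from `v` to smaller vertices. -/
theorem stmt17 {V : Type*} [Fintype V] (k r : ℕ) (G : SimpleGraph V) :
    (¬ ∃ U : Set V, U.Nonempty ∧
        ∀ v ∈ U, ∀ A : Finset V, v ∉ A → A.card < k →
          ∃ u ∈ U, u ≠ v ∧ ∃ p : G.Walk v u, p.length ≤ r ∧ ∀ x ∈ p.support, x ∉ A)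
      ↔
    (∃ lt : V → V → Prop, IsStrictTotalOrder V lt ∧
      ∀ v : V, ∃ A : Finset V, v ∉ A ∧ A.card < k ∧
        ∀ w : V, lt w v →
          ¬ ∃ p : G.Walk v w, p.length ≤ r ∧ ∀ x ∈ p.support, x ∉ A) := by
  classical
  constructor
  · intro hnone
    obtain ⟨_, hIic⟩ := exists_linearOrder_forall_not_Iic (G.escapesInto_monotone k r) hnone
    exact ⟨(· < ·), inferInstance, fun v => (G.not_escapesInto_Iic_iff k r v).1 (hIic v)⟩
  · rintro ⟨lt, _, hcut⟩
    let := linearOrderOfSTO lt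
    exact not_exists_forall_of_forall_not_Iic (G.escapesInto_monotone k r)
      fun v => (G.not_escapesInto_Iic_iff k r v).2 (hcut v)
end

section
/- Fix r ≥ 2 and k ≥ 1. Let H be a finite simple graph with minimum degree at least 2rk + 2, and let G be the exact (r−1)-subdivision of H: the graph obtained from H by replacing every edge {x,y} of H by a path of length r through r−1 new internal vertices, where distinct edges of H receive disjoint sets of internal vertices; write φ : V(H) → V(G) for the embedding of the original (principal) vertices. Then for every k-flip G′ of G, there are at most k vertices x ∈ V(H) such that the set {y ∈ V(H) : the distance between φ(x) and φ(y) in G′ is at most r} has at most k elements. (In other words, the set of principal vertices is an (r,k,k)-hideout in G.) -/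
/-- Let `r ≥ 2`, `k ≥ 1`, let `H` be a finite graph of minimum degree at least
`2rk + 2`, and let `G` be the exact `(r-1)`-subdivision of `H`, where `φ` embeds the
principal vertices and `p x y i` (for `H.Adj x y`, `0 ≤ i ≤ r`) enumerates the
subdivision path of the edge `{x, y}` from `φ x` to `φ y`.  Then for every `k`-flip
`G'` of `G`, there are at most `k` principal vertices `x` whose radius-`r` ball in
`G'` contains at most `k` principal vertices: the principal vertices form an
`(r, k, k)`-hideout in `G`. -/
theorem stmt18 {V W : Type*} [Fintype V] [Fintype W]
    (r k : ℕ) (hr : 2 ≤ r) (hk : 1 ≤ k)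
    (H : SimpleGraph V) (hdeg : ∀ x : V, 2 * r * k + 2 ≤ (H.neighborSet x).ncard)
    (G : SimpleGraph W) (φ : V → W) (hφ : Function.Injective φ)
    (p : V → V → ℕ → W)
    (hp0 : ∀ x y : V, H.Adj x y → p x y 0 = φ x)
    (hpr : ∀ x y : V, H.Adj x y → p x y r = φ y)
    (hrev : ∀ x y : V, H.Adj x y → ∀ i ≤ r, p x y i = p y x (r - i))
    (hpathinj : ∀ x y : V, H.Adj x y → ∀ i ≤ r, ∀ j ≤ r, p x y i = p x y j → i = j)
    (hinternal : ∀ x y : V, H.Adj x y →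
      ∀ i, 1 ≤ i → i ≤ r - 1 → p x y i ∉ Set.range φ)
    (hdisjoint : ∀ x y x' y' : V, H.Adj x y → H.Adj x' y' →
      ∀ i, 1 ≤ i → i ≤ r - 1 → ∀ j, 1 ≤ j → j ≤ r - 1 →
        p x y i = p x' y' j →
        (x = x' ∧ y = y' ∧ i = j) ∨ (x = y' ∧ y = x' ∧ i = r - j))
    (hcover : ∀ w : W, (∃ x : V, φ x = w) ∨
      ∃ x y : V, ∃ i : ℕ, H.Adj x y ∧ 1 ≤ i ∧ i ≤ r - 1 ∧ p x y i = w)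
    (hadj : ∀ w w' : W, G.Adj w w' ↔
      ∃ x y : V, H.Adj x y ∧ ∃ i : ℕ, i < r ∧
        ((w = p x y i ∧ w' = p x y (i + 1)) ∨ (w' = p x y i ∧ w = p x y (i + 1))))
    (G' : SimpleGraph W) (hflip : IsKFlip k G G') :
    {x : V | {y : V | ∃ q : G'.Walk (φ x) (φ y), q.length ≤ r}.ncard ≤ k}.ncard ≤ k := by
  classical
  obtain ⟨c, F, hFsymm, hF⟩ := hflip
  by_contra hcon
  push_neg at hcon
  -- Pigeonhole 1: two hidden principal vertices of the same color
  have hSfin : ({x : V | {y : V | ∃ q : G'.Walk (φ x) (φ y), q.length ≤ r}.ncard ≤ k}).Finite :=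
    Set.toFinite _
  have hcard1 : (Finset.univ : Finset (Fin k)).card < hSfin.toFinset.card := by
    rw [Finset.card_univ, Fintype.card_fin, ← Set.ncard_eq_toFinset_card]
    exact hcon
  obtain ⟨x, hxS, x'', hx''S, hxne, hcc0⟩ :=
    Finset.exists_ne_map_eq_of_card_lt_of_maps_to hcard1
      (f := fun v => c (φ v)) (fun a _ => Finset.mem_univ _)
  rw [Set.Finite.mem_toFinset] at hxS hx''S
  have hcc : c (φ x) = c (φ x'') := hcc0
  have hBxk : ({y : V | ∃ q : G'.Walk (φ x) (φ y), q.length ≤ r}).ncard ≤ k := hxS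
  have hBx''k : ({y : V | ∃ q : G'.Walk (φ x'') (φ y), q.length ≤ r}).ncard ≤ k := hx''S
  -- basic helpers
  have hint : ∀ (a b : V), H.Adj a b → ∀ i, 1 ≤ i → i ≤ r - 1 → ∀ v : V, p a b i ≠ φ v :=
    fun a b hab i h1 h2 v heq => hinternal a b hab i h1 h2 ⟨v, heq.symm⟩
  have GAdjP : ∀ (a b : V), H.Adj a b → ∀ i, i < r → G.Adj (p a b i) (p a b (i + 1)) :=
    fun a b hab i hi => (hadj _ _).mpr ⟨a, b, hab, i, hi, Or.inl ⟨rfl, rfl⟩⟩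
  have flipF : ∀ u v : W, u ≠ v → G.Adj u v → ¬ G'.Adj u v → F (c u) (c v) := by
    intro u v hne hG hG'
    by_contra hFn
    exact hG' ((hF u v hne).mpr (Or.inl ⟨hG, hFn⟩))
  have flipA : ∀ u v : W, u ≠ v → ¬ G.Adj u v → F (c u) (c v) → G'.Adj u v :=
    fun u v hne hG hFuv => (hF u v hne).mpr (Or.inr ⟨hFuv, hG⟩)
  -- equality of path points on two edges sharing the endpoint x
  have eqP : ∀ y y' : V, H.Adj x y → H.Adj x y' → ∀ i ≤ r, ∀ j ≤ r,
      p x y i = p x y' j → (y = y' ∧ i = j) ∨ (i = 0 ∧ j = 0) := by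
    intro y y' hy hy' i hi j hj heq
    have hi3 : i = 0 ∨ i = r ∨ (1 ≤ i ∧ i ≤ r - 1) := by omega
    have hj3 : j = 0 ∨ j = r ∨ (1 ≤ j ∧ j ≤ r - 1) := by omega
    rcases hi3 with rfl | rfl | ⟨hi1, hi2⟩
    · rcases hj3 with rfl | rfl | ⟨hj1, hj2⟩
      · exact Or.inr ⟨rfl, rfl⟩
      · rw [hp0 x y hy, hpr x y' hy'] at heq
        exact absurd (hφ heq) hy'.ne
      · rw [hp0 x y hy] at heq
        exact absurd heq.symm (hint x y' hy' j hj1 hj2 x)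
    · rcases hj3 with rfl | rfl | ⟨hj1, hj2⟩
      · rw [hpr x y hy, hp0 x y' hy'] at heq
        exact absurd (hφ heq).symm hy.ne
      · rw [hpr x y hy, hpr x y' hy'] at heq
        exact Or.inl ⟨hφ heq, rfl⟩
      · rw [hpr x y hy] at heq
        exact absurd heq.symm (hint x y' hy' j hj1 hj2 y)
    · rcases hj3 with rfl | rfl | ⟨hj1, hj2⟩
      · rw [hp0 x y' hy'] at heq
        exact absurd heq (hint x y hy i hi1 hi2 x)
      · rw [hpr x y' hy'] at heq
        exact absurd heq (hint x y hy i hi1 hi2 y')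
      · rcases hdisjoint x y x y' hy hy' i hi1 hi2 j hj1 hj2 heq with ⟨_, h1, h2⟩ | ⟨h1, _, _⟩
        · exact Or.inl ⟨h1, h2⟩
        · exact absurd h1 hy'.ne
  -- neighbours in G of an internal vertex of the path of the edge (x, y)
  have adjInt : ∀ y : V, H.Adj x y → ∀ M, 1 ≤ M → M ≤ r - 1 → ∀ v : W,
      G.Adj (p x y M) v → v = p x y (M - 1) ∨ v = p x y (M + 1) := by
    intro y hy M hM1 hM2 v hGadj
    rcases (hadj _ _).mp hGadj with ⟨a, b, hab, i, hi, ⟨h1, h2⟩ | ⟨h1, h2⟩⟩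
    · -- p x y M = p a b i, v = p a b (i+1)
      have hi1 : 1 ≤ i := by
        rcases Nat.eq_zero_or_pos i with rfl | h
        · rw [hp0 a b hab] at h1
          exact absurd h1 (hint x y hy M hM1 hM2 a)
        · exact h
      have hi2 : i ≤ r - 1 := by omega
      rcases hdisjoint x y a b hy hab M hM1 hM2 i hi1 hi2 h1 with ⟨hxa, hyb, hMi⟩ | ⟨hxa, hyb, hMi⟩
      · subst hxa; subst hyb; subst hMi
        exact Or.inr h2
      · subst hxa; subst hyb
        refine Or.inl ?_
        have hrw : p x y (M - 1) = p y x (r - (M - 1)) := hrev x y hy (M - 1) (by omega)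
        have hidx : r - (M - 1) = i + 1 := by omega
        rw [hrw, hidx]
        exact h2
    · -- v = p a b i, p x y M = p a b (i+1)
      have hi2' : i + 1 ≤ r - 1 := by
        have hne : i + 1 ≠ r := by
          intro he
          rw [he, hpr a b hab] at h2
          exact hint x y hy M hM1 hM2 b h2
        omega
      rcases hdisjoint x y a b hy hab M hM1 hM2 (i + 1) (by omega) hi2' h2 with
        ⟨hxa, hyb, hMi⟩ | ⟨hxa, hyb, hMi⟩
      · subst hxa; subst hyb
        refine Or.inl ?_
        have hidx : M - 1 = i := by omega
        rw [hidx]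
        exact h1
      · subst hxa; subst hyb
        refine Or.inr ?_
        have hrw : p x y (M + 1) = p y x (r - (M + 1)) := hrev x y hy (M + 1) (by omega)
        have hidx : r - (M + 1) = i := by omega
        rw [hrw, hidx]
        exact h1
  -- φ x'' is not G-adjacent to the first internal vertex of a path from x (to y ≠ x'')
  have hPnadj : ∀ y : V, H.Adj x y → y ≠ x'' → ¬ G.Adj (φ x'') (p x y 1) := by
    intro y hy hyne hGadj
    rcases adjInt y hy 1 le_rfl (by omega) (φ x'') hGadj.symm with h | h
    · rw [show (1 : ℕ) - 1 = 0 from rfl, hp0 x y hy] at h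
      exact hxne (hφ h).symm
    · rcases eq_or_lt_of_le hr with hr2 | hr3
      · rw [show (1 : ℕ) + 1 = r by omega, hpr x y hy] at h
        exact hyne (hφ h).symm
      · exact absurd h.symm (hint x y hy 2 (by omega) (by omega) x'')
  have hadjx1 : ∀ y : V, H.Adj x y → G.Adj (φ x) (p x y 1) := by
    intro y hy
    have h := GAdjP x y hy 0 (by omega)
    rwa [hp0 x y hy] at h
  -- the center and level functions
  set fM : V → ℕ := fun y =>
    if 1 ≤ Nat.findGreatest (fun m => ∃ q : G'.Walk (φ x) (p x y m), q.length ≤ m) r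
    then Nat.findGreatest (fun m => ∃ q : G'.Walk (φ x) (p x y m), q.length ≤ m) r
    else Nat.findGreatest (fun m => ∃ q : G'.Walk (φ x'') (p x y m), q.length ≤ m) r with hfM
  set fz : V → V := fun y =>
    if 1 ≤ Nat.findGreatest (fun m => ∃ q : G'.Walk (φ x) (p x y m), q.length ≤ m) r
    then x else x'' with hfz
  have key : ∀ y : V, H.Adj x y →
      ¬(∃ q : G'.Walk (φ x) (φ y), q.length ≤ r) →
      ¬(∃ q : G'.Walk (φ x'') (φ y), q.length ≤ r) →
      y ≠ x'' →
      ∃ (z : V) (M : ℕ), fz y = z ∧ fM y = M ∧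
      (1 ≤ M ∧ M ≤ r - 1) ∧
      (∃ q : G'.Walk (φ z) (p x y M), q.length ≤ M) ∧
      (∀ m, M < m → m ≤ r → ¬∃ q : G'.Walk (φ z) (p x y m), q.length ≤ m) := by
    intro y hy hnx hnx'' hyne
    set A := Nat.findGreatest (fun m => ∃ q : G'.Walk (φ x) (p x y m), q.length ≤ m) r with hA
    set B := Nat.findGreatest (fun m => ∃ q : G'.Walk (φ x'') (p x y m), q.length ≤ m) r with hB
    by_cases h1 : 1 ≤ A
    · have hfzy : fz y = x := by
        simp only [hfz]; rw [← hA, if_pos h1]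
      have hfMy : fM y = A := by
        simp only [hfM]; rw [← hA, ← hB, if_pos h1]
      have h0 : ∃ q : G'.Walk (φ x) (p x y 0), q.length ≤ 0 := by
        rw [hp0 x y hy]; exact ⟨SimpleGraph.Walk.nil, by simp⟩
      have hspec : ∃ q : G'.Walk (φ x) (p x y A), q.length ≤ A := by
        rw [hA]
        exact Nat.findGreatest_spec
          (P := fun m => ∃ q : G'.Walk (φ x) (p x y m), q.length ≤ m) (Nat.zero_le r) h0
      have hler : A ≤ r := by
        rw [hA]
        exact Nat.findGreatest_le (P := fun m => ∃ q : G'.Walk (φ x) (p x y m), q.length ≤ m) r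
      have hner : A ≠ r := by
        intro hAr
        apply hnx
        rw [← hpr x y hy, ← hAr]
        exact hspec
      refine ⟨x, A, hfzy, hfMy, ⟨h1, by omega⟩, hspec, ?_⟩
      intro m hm hmr
      rw [hA] at hm
      exact Nat.findGreatest_is_greatest
        (P := fun m => ∃ q : G'.Walk (φ x) (p x y m), q.length ≤ m) hm hmr
    · have hfzy : fz y = x'' := by
        simp only [hfz]; rw [← hA, if_neg h1]
      have hfMy : fM y = B := by
        simp only [hfM]; rw [← hA, ← hB, if_neg h1]
      have hnR1 : ¬∃ q : G'.Walk (φ x) (p x y 1), q.length ≤ 1 := by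
        intro hc
        have h2 := Nat.le_findGreatest
          (P := fun m => ∃ q : G'.Walk (φ x) (p x y m), q.length ≤ m) (show 1 ≤ r by omega) hc
        rw [← hA] at h2
        omega
      have hnadj1 : ¬ G'.Adj (φ x) (p x y 1) := fun ha =>
        hnR1 ⟨SimpleGraph.Walk.cons ha SimpleGraph.Walk.nil, by simp⟩
      have hGa : G.Adj (φ x) (p x y 1) := hadjx1 y hy
      have hne1 : φ x ≠ p x y 1 := fun h => hint x y hy 1 le_rfl (by omega) x h.symm
      have hFa : F (c (φ x)) (c (p x y 1)) := flipF _ _ hne1 hGa hnadj1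
      have hne2 : φ x'' ≠ p x y 1 := fun h => hint x y hy 1 le_rfl (by omega) x'' h.symm
      have hG'a : G'.Adj (φ x'') (p x y 1) := by
        refine flipA _ _ hne2 (hPnadj y hy hyne) ?_
        rw [← hcc]; exact hFa
      have hR1 : ∃ q : G'.Walk (φ x'') (p x y 1), q.length ≤ 1 :=
        ⟨SimpleGraph.Walk.cons hG'a SimpleGraph.Walk.nil, by simp⟩
      have h1B : 1 ≤ B := by
        rw [hB]
        exact Nat.le_findGreatest
          (P := fun m => ∃ q : G'.Walk (φ x'') (p x y m), q.length ≤ m) (by omega) hR1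
      have hspec : ∃ q : G'.Walk (φ x'') (p x y B), q.length ≤ B := by
        rw [hB]
        exact Nat.findGreatest_spec
          (P := fun m => ∃ q : G'.Walk (φ x'') (p x y m), q.length ≤ m) (show 1 ≤ r by omega) hR1
      have hler : B ≤ r := by
        rw [hB]
        exact Nat.findGreatest_le (P := fun m => ∃ q : G'.Walk (φ x'') (p x y m), q.length ≤ m) r
      have hner : B ≠ r := by
        intro hBr
        apply hnx''
        rw [← hpr x y hy, ← hBr]
        exact hspec
      refine ⟨x'', B, hfzy, hfMy, ⟨h1B, by omega⟩, hspec, ?_⟩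
      intro m hm hmr
      rw [hB] at hm
      exact Nat.findGreatest_is_greatest
        (P := fun m => ∃ q : G'.Walk (φ x'') (p x y m), q.length ≤ m) hm hmr
  -- the set of good neighbours of x and its size
  have hTsub : H.neighborSet x ⊆
      {y : V | H.Adj x y ∧ ¬(∃ q : G'.Walk (φ x) (φ y), q.length ≤ r) ∧
        ¬(∃ q : G'.Walk (φ x'') (φ y), q.length ≤ r) ∧ y ≠ x''} ∪
      ({y : V | ∃ q : G'.Walk (φ x) (φ y), q.length ≤ r} ∪
        {y : V | ∃ q : G'.Walk (φ x'') (φ y), q.length ≤ r} ∪ {x''}) := by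
    intro y hy
    have hyadj : H.Adj x y := hy
    by_cases h1 : ∃ q : G'.Walk (φ x) (φ y), q.length ≤ r
    · exact Or.inr (Or.inl (Or.inl h1))
    by_cases h2 : ∃ q : G'.Walk (φ x'') (φ y), q.length ≤ r
    · exact Or.inr (Or.inl (Or.inr h2))
    by_cases h3 : y = x''
    · exact Or.inr (Or.inr h3)
    · exact Or.inl ⟨hyadj, h1, h2, h3⟩
  have hUk : (({y : V | ∃ q : G'.Walk (φ x) (φ y), q.length ≤ r} ∪
      {y : V | ∃ q : G'.Walk (φ x'') (φ y), q.length ≤ r} ∪ {x''}) : Set V).ncard ≤ k + k + 1 := by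
    refine le_trans (Set.ncard_union_le _ _) ?_
    have h1 : ({y : V | ∃ q : G'.Walk (φ x) (φ y), q.length ≤ r} ∪
        {y : V | ∃ q : G'.Walk (φ x'') (φ y), q.length ≤ r}).ncard ≤ k + k :=
      le_trans (Set.ncard_union_le _ _) (add_le_add hBxk hBx''k)
    have h2 : ({x''} : Set V).ncard = 1 := Set.ncard_singleton _
    omega
  have hTcard : 2 * (r - 1) * k + 1 ≤
      ({y : V | H.Adj x y ∧ ¬(∃ q : G'.Walk (φ x) (φ y), q.length ≤ r) ∧
        ¬(∃ q : G'.Walk (φ x'') (φ y), q.length ≤ r) ∧ y ≠ x''}).ncard := by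
    have h1 := hdeg x
    have h2 := Set.ncard_le_ncard hTsub (Set.toFinite _)
    have h3 := Set.ncard_union_le
      ({y : V | H.Adj x y ∧ ¬(∃ q : G'.Walk (φ x) (φ y), q.length ≤ r) ∧
        ¬(∃ q : G'.Walk (φ x'') (φ y), q.length ≤ r) ∧ y ≠ x''})
      ({y : V | ∃ q : G'.Walk (φ x) (φ y), q.length ≤ r} ∪
        {y : V | ∃ q : G'.Walk (φ x'') (φ y), q.length ≤ r} ∪ {x''})
    have hrk : 2 * r * k = 2 * (r - 1) * k + 2 * k := by
      obtain ⟨m, rfl⟩ : ∃ m, r = m + 1 := ⟨r - 1, by omega⟩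
      have hm : m + 1 - 1 = m := rfl
      rw [hm]; ring
    set Ac := 2 * r * k with hAc
    set Bc := 2 * (r - 1) * k with hBc
    omega
  -- Pigeonhole 2
  set g : V → Bool × ℕ × Fin k := fun y =>
    (decide (1 ≤ Nat.findGreatest (fun m => ∃ q : G'.Walk (φ x) (p x y m), q.length ≤ m) r),
     fM y - 1, c (p x y (fM y + 1))) with hg
  have hTfin : ({y : V | H.Adj x y ∧ ¬(∃ q : G'.Walk (φ x) (φ y), q.length ≤ r) ∧
      ¬(∃ q : G'.Walk (φ x'') (φ y), q.length ≤ r) ∧ y ≠ x''}).Finite := Set.toFinite _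
  have hmaps : ∀ yy ∈ hTfin.toFinset,
      g yy ∈ ((Finset.univ : Finset Bool) ×ˢ Finset.range (r - 1) ×ˢ (Finset.univ : Finset (Fin k))) := by
    intro yy hyy
    rw [Set.Finite.mem_toFinset] at hyy
    obtain ⟨hy, hn1, hn2, hn3⟩ := hyy
    obtain ⟨z, M, hfzy, hfMy, ⟨hb1, hb2⟩, -, -⟩ := key yy hy hn1 hn2 hn3
    simp only [hg, Finset.mem_product, Finset.mem_univ, Finset.mem_range, true_and, and_true]
    rw [hfMy]
    omega
  have hcard2 : ((Finset.univ : Finset Bool) ×ˢ Finset.range (r - 1) ×ˢ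
      (Finset.univ : Finset (Fin k))).card < hTfin.toFinset.card := by
    rw [Finset.card_product, Finset.card_product, Finset.card_univ, Finset.card_univ,
      Finset.card_range, Fintype.card_bool, Fintype.card_fin, ← Set.ncard_eq_toFinset_card]
    calc 2 * ((r - 1) * k) = 2 * (r - 1) * k := by ring
    _ < 2 * (r - 1) * k + 1 := Nat.lt_succ_self _
    _ ≤ _ := hTcard
  obtain ⟨y, hyT, y', hy'T, hyy', hgg⟩ :=
    Finset.exists_ne_map_eq_of_card_lt_of_maps_to hcard2 hmaps
  rw [Set.Finite.mem_toFinset] at hyT hy'T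
  obtain ⟨hyH, hyn1, hyn2, hyn3⟩ := hyT
  obtain ⟨hy'H, hy'n1, hy'n2, hy'n3⟩ := hy'T
  obtain ⟨z, M, hfzy, hfMy, ⟨hM1y, hM2y⟩, hRy, hGy⟩ := key y hyH hyn1 hyn2 hyn3
  obtain ⟨z', M', hfzy', hfMy', ⟨hM1y', hM2y'⟩, hRy', hGy'⟩ := key y' hy'H hy'n1 hy'n2 hy'n3
  simp only [hg, Prod.mk.injEq] at hgg
  obtain ⟨hbool, hm1, hcol⟩ := hgg
  rw [hfMy, hfMy'] at hm1 hcol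
  have hMeq : M = M' := by omega
  have hiff : (1 ≤ Nat.findGreatest (fun m => ∃ q : G'.Walk (φ x) (p x y m), q.length ≤ m) r) ↔
      (1 ≤ Nat.findGreatest (fun m => ∃ q : G'.Walk (φ x) (p x y' m), q.length ≤ m) r) := by
    rw [← decide_eq_decide]; exact hbool
  have hzeq : z = z' := by
    rw [← hfzy, ← hfzy']
    simp only [hfz]
    by_cases hA : 1 ≤ Nat.findGreatest (fun m => ∃ q : G'.Walk (φ x) (p x y m), q.length ≤ m) r
    · rw [if_pos hA, if_pos (hiff.mp hA)]
    · rw [if_neg hA, if_neg (fun h => hA (hiff.mpr h))]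
  subst hMeq
  subst hzeq
  -- the final contradiction
  have hGuv : G.Adj (p x y M) (p x y (M + 1)) := GAdjP x y hyH M (by omega)
  have hnG'uv : ¬ G'.Adj (p x y M) (p x y (M + 1)) := by
    intro ha
    obtain ⟨q, hq⟩ := hRy
    exact hGy (M + 1) (by omega) (by omega)
      ⟨q.concat ha, by rw [SimpleGraph.Walk.length_concat]; omega⟩
  have hneuv : p x y M ≠ p x y (M + 1) := by
    intro h
    have := hpathinj x y hyH M (by omega) (M + 1) (by omega) h
    omega
  have hFuv : F (c (p x y M)) (c (p x y (M + 1))) := flipF _ _ hneuv hGuv hnG'uv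
  have hneuv' : p x y M ≠ p x y' (M + 1) := by
    intro h
    rcases eqP y y' hyH hy'H M (by omega) (M + 1) (by omega) h with ⟨h1, _⟩ | ⟨_, h2⟩
    · exact hyy' h1
    · omega
  have hnGuv' : ¬ G.Adj (p x y M) (p x y' (M + 1)) := by
    intro h
    rcases adjInt y hyH M (by omega) (by omega) _ h with h' | h'
    · rcases eqP y y' hyH hy'H (M - 1) (by omega) (M + 1) (by omega) h'.symm with
        ⟨h1, _⟩ | ⟨_, h2⟩
      · exact hyy' h1
      · omega
    · rcases eqP y y' hyH hy'H (M + 1) (by omega) (M + 1) (by omega) h'.symm with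
        ⟨h1, _⟩ | ⟨_, h2⟩
      · exact hyy' h1
      · omega
  have hG'uv' : G'.Adj (p x y M) (p x y' (M + 1)) := by
    refine flipA _ _ hneuv' hnGuv' ?_
    rw [← hcol]; exact hFuv
  obtain ⟨q, hq⟩ := hRy
  exact hGy' (M + 1) (by omega) (by omega)
    ⟨q.concat hG'uv', by rw [SimpleGraph.Walk.length_concat]; omega⟩
end
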